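/- arXiv:2311.08060 — 8 statements merged into one kernel-verified Lean document; each statement's English description precedes it below -/
import Mathlib

section
/- Let n, t ∈ ℕ with 8 ≤ t < n and t divisible by 8, and let V_I be a nonempty proposal set and V_O a decision set. Let 𝒜 be a deterministic algorithm in the omission model such that every infinite execution of 𝒜 satisfies Termination (every correct process decides) and Agreement (no two correct processes decide different values), and suppose there exist two infinite executions E₀ and E₁ of 𝒜 in which all n processes are correct and in which values v₀' and v₁' are decided respectively, with v₀' ≠ v₁'. Then 𝒜 has message complexity at least t²/32. -/
/-- A message: a sender, a (distinct) receiver and a round number. -/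
structure Message (n : ℕ) where
  sender : Fin n
  receiver : Fin n
  round : ℕ
  ne : sender ≠ receiver

/-- A valid set of messages received by a process in state `s`:
every message has the right receiver and round, and there is
at most one message per sender. -/
def ValidRecv {n : ℕ} {St : Type} (proc : St → Fin n) (rnd : St → ℕ)
    (s : St) (M : Set (Message n)) : Prop :=
  (∀ m ∈ M, m.receiver = proc s ∧ m.round = rnd s) ∧
  (∀ m ∈ M, ∀ m' ∈ M, m.sender = m'.sender → m = m')

/-- A deterministic algorithm in the synchronous (omission) model:
a type of local states recording a process, a round, a proposal and a
decision, initial states and initial messages for every proposal, and a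
deterministic transition function. -/
structure Algorithm (n : ℕ) (Vi Vo : Type) where
  St : Type
  proc : St → Fin n
  rnd : St → ℕ
  prop : St → Vi
  dec : St → Option Vo
  init : Fin n → Vi → St
  initMsgs : Fin n → Vi → Set (Message n)
  trans : St → Set (Message n) → St × Set (Message n)
  init_proc : ∀ i v, proc (init i v) = i
  init_rnd : ∀ i v, rnd (init i v) = 1
  init_prop : ∀ i v, prop (init i v) = v
  init_dec : ∀ i v, dec (init i v) = none
  initMsgs_sender : ∀ i v, ∀ m ∈ initMsgs i v, m.sender = i
  initMsgs_round : ∀ i v, ∀ m ∈ initMsgs i v, m.round = 1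
  initMsgs_uniq : ∀ i v, ∀ m ∈ initMsgs i v, ∀ m' ∈ initMsgs i v,
    m.receiver = m'.receiver → m = m'
  trans_ok : ∀ s M, ValidRecv proc rnd s M →
    proc (trans s M).1 = proc s ∧
    rnd (trans s M).1 = rnd s + 1 ∧
    prop (trans s M).1 = prop s ∧
    (dec s ≠ none → dec (trans s M).1 = dec s) ∧
    (∀ m ∈ (trans s M).2, m.sender = proc s ∧ m.round = rnd s + 1) ∧
    (∀ m ∈ (trans s M).2, ∀ m' ∈ (trans s M).2, m.receiver = m'.receiver → m = m')

/-- The data of an execution of algorithm `A`: the set of faulty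
processes and, for every process and round, a state and the four sets of
sent, send-omitted, received and receive-omitted messages. -/
structure Exec {n : ℕ} {Vi Vo : Type} (A : Algorithm n Vi Vo) where
  faulty : Set (Fin n)
  st : Fin n → ℕ → A.St
  sent : Fin n → ℕ → Set (Message n)
  sendOmit : Fin n → ℕ → Set (Message n)
  recvd : Fin n → ℕ → Set (Message n)
  recvOmit : Fin n → ℕ → Set (Message n)

/-- `j` is one of the rounds `1, …, k` (where `k ∈ ℕ ∪ {∞}`). -/
def InHorizon (k : ℕ∞) (j : ℕ) : Prop := 1 ≤ j ∧ (j : ℕ∞) ≤ k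

/-- `E` is a `k`-round execution of `A` with at most `t` faulty processes. -/
def IsExec {n : ℕ} {Vi Vo : Type} (t : ℕ) (A : Algorithm n Vi Vo) (k : ℕ∞)
    (E : Exec A) : Prop :=
  -- at most `t` faulty processes
  E.faulty.encard ≤ (t : ℕ∞) ∧
  -- every process starts in one of its initial states, with
  -- sent ∪ send-omitted equal to its prescribed initial send set
  ((1 : ℕ∞) ≤ k → ∀ i, ∃ v, E.st i 1 = A.init i v ∧
      E.sent i 1 ∪ E.sendOmit i 1 = A.initMsgs i v) ∧
  -- later states and sent ∪ send-omitted sets are obtained by the transition function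
  (∀ i j, 1 ≤ j → ((j + 1 : ℕ) : ℕ∞) ≤ k →
      A.trans (E.st i j) (E.recvd i j)
        = (E.st i (j + 1), E.sent i (j + 1) ∪ E.sendOmit i (j + 1))) ∧
  -- per-round well-formedness (fragments)
  (∀ i j, InHorizon k j →
      A.proc (E.st i j) = i ∧ A.rnd (E.st i j) = j ∧
      (∀ m ∈ E.sent i j ∪ E.sendOmit i j, m.sender = i ∧ m.round = j) ∧
      (∀ m ∈ E.recvd i j ∪ E.recvOmit i j, m.receiver = i ∧ m.round = j) ∧
      E.sent i j ∩ E.sendOmit i j = ∅ ∧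
      E.recvd i j ∩ E.recvOmit i j = ∅ ∧
      (∀ m ∈ E.sent i j ∪ E.sendOmit i j, ∀ m' ∈ E.sent i j ∪ E.sendOmit i j,
        m.receiver = m'.receiver → m = m') ∧
      (∀ m ∈ E.recvd i j ∪ E.recvOmit i j, ∀ m' ∈ E.recvd i j ∪ E.recvOmit i j,
        m.sender = m'.sender → m = m')) ∧
  -- send-validity
  (∀ i j, InHorizon k j → ∀ m ∈ E.sent i j,
      m ∈ E.recvd m.receiver j ∪ E.recvOmit m.receiver j) ∧
  -- receive-validity
  (∀ i j, InHorizon k j → ∀ m ∈ E.recvd i j ∪ E.recvOmit i j, m ∈ E.sent m.sender j) ∧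
  -- omission-validity
  (∀ i, (∃ j, InHorizon k j ∧ (E.sendOmit i j ≠ ∅ ∨ E.recvOmit i j ≠ ∅)) → i ∈ E.faulty)

/-- Process `i` proposes `v` in `E`. -/
def Proposes {n : ℕ} {Vi Vo : Type} {A : Algorithm n Vi Vo}
    (E : Exec A) (i : Fin n) (v : Vi) : Prop :=
  A.prop (E.st i 1) = v

/-- Process `i` decides `v` in the `k`-round execution `E`. -/
def Decides {n : ℕ} {Vi Vo : Type} {A : Algorithm n Vi Vo}
    (k : ℕ∞) (E : Exec A) (i : Fin n) (v : Vo) : Prop :=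
  ∃ j, InHorizon k j ∧ A.dec (E.st i j) = some v

/-- The number of messages sent (not send-omitted) by correct processes in `E`. -/
noncomputable def msgCount {n : ℕ} {Vi Vo : Type} {A : Algorithm n Vi Vo}
    (E : Exec A) : ℕ∞ :=
  {m : Message n | ∃ i, i ∉ E.faulty ∧ ∃ j, 1 ≤ j ∧ m ∈ E.sent i j}.encard

/-- The message complexity of `A`: the supremum, over all infinite
executions of `A` (with at most `t` faulty processes), of the number of
messages sent by correct processes. -/
noncomputable def MsgComplexity {n : ℕ} {Vi Vo : Type} (t : ℕ)
    (A : Algorithm n Vi Vo) : ℕ∞ :=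
  ⨆ E : {E : Exec A // IsExec t A ⊤ E}, msgCount E.1

/-- Two `k`-round executions are indistinguishable to process `i`: it has the
same proposal and receives exactly the same messages in every round of both. -/
def Indist {n : ℕ} {Vi Vo : Type} {A : Algorithm n Vi Vo}
    (k : ℕ∞) (E E' : Exec A) (i : Fin n) : Prop :=
  A.prop (E.st i 1) = A.prop (E'.st i 1) ∧
  ∀ j, InHorizon k j → E.recvd i j = E'.recvd i j

/-- Group `G ⊊ Π` of at most `t` processes is isolated from round `k` in the
infinite execution `E`: every process of `G` is faulty, send-omits no message,
and receive-omits exactly those messages sent to it in rounds `≥ k` by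
processes outside `G`. -/
def IsolatedFrom {n : ℕ} {Vi Vo : Type} {A : Algorithm n Vi Vo}
    (t : ℕ) (E : Exec A) (G : Set (Fin n)) (k : ℕ) : Prop :=
  G ≠ Set.univ ∧ G.encard ≤ (t : ℕ∞) ∧
  ∀ g ∈ G, g ∈ E.faulty ∧
    (∀ j, 1 ≤ j → E.sendOmit g j = ∅) ∧
    (∀ j, 1 ≤ j → E.recvOmit g j
      = {m | m.receiver = g ∧ m.sender ∉ G ∧ k ≤ j ∧ m ∈ E.sent m.sender j})

namespace TwoDefault

variable {n : ℕ} {Vi Vo : Type} (A : Algorithm n Vi Vo)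

/-- The canonical dynamics determined by a proposal vector `σ` and a
"deafness schedule" `d` (process `i` receives nothing from round `d i` on;
`d i = ⊤` means `i` is never deaf).  `dyn A σ d k i` is the pair of the state
of `i` at round `k+1` together with the set of round-`(k+1)` messages it sends. -/
noncomputable def dyn (σ : Fin n → Vi) (d : Fin n → ℕ∞) :
    ℕ → Fin n → A.St × Set (Message n)
  | 0 => fun i => (A.init i (σ i), A.initMsgs i (σ i))
  | (k+1) => fun i => A.trans (dyn σ d k i).1
      {m : Message n | m.receiver = i ∧ m ∈ (dyn σ d k m.sender).2 ∧
        ¬ d i ≤ ((k+1 : ℕ) : ℕ∞)}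

/-- The round-`(k+1)` messages received by `i` under the canonical dynamics. -/
def recvS (σ : Fin n → Vi) (d : Fin n → ℕ∞) (k : ℕ) (i : Fin n) :
    Set (Message n) :=
  {m : Message n | m.receiver = i ∧ m ∈ (dyn A σ d k m.sender).2 ∧
    ¬ d i ≤ ((k+1 : ℕ) : ℕ∞)}

lemma dyn_succ (σ : Fin n → Vi) (d : Fin n → ℕ∞) (k : ℕ) (i : Fin n) :
    dyn A σ d (k+1) i = A.trans (dyn A σ d k i).1 (recvS A σ d k i) := rfl

/-- Basic invariants of the canonical dynamics. -/
lemma dyn_inv (σ : Fin n → Vi) (d : Fin n → ℕ∞) : ∀ k i,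
    A.proc (dyn A σ d k i).1 = i ∧
    A.rnd (dyn A σ d k i).1 = k + 1 ∧
    (∀ m ∈ (dyn A σ d k i).2, m.sender = i ∧ m.round = k + 1) ∧
    (∀ m ∈ (dyn A σ d k i).2, ∀ m' ∈ (dyn A σ d k i).2,
      m.receiver = m'.receiver → m = m') := by
  intro k
  induction k with
  | zero =>
      intro i
      refine ⟨A.init_proc i (σ i), A.init_rnd i (σ i), ?_, ?_⟩
      · intro m hm
        exact ⟨A.initMsgs_sender i (σ i) m hm, A.initMsgs_round i (σ i) m hm⟩
      · intro m hm m' hm' h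
        exact A.initMsgs_uniq i (σ i) m hm m' hm' h
  | succ k ih =>
      intro i
      have hvr : ValidRecv A.proc A.rnd (dyn A σ d k i).1 (recvS A σ d k i) := by
        constructor
        · intro m hm
          refine ⟨by rw [(ih i).1]; exact hm.1, ?_⟩
          rw [(ih i).2.1]
          exact ((ih m.sender).2.2.1 m hm.2.1).2
        · intro m hm m' hm' hs
          have h1 := hm.2.1
          have h2 : m' ∈ (dyn A σ d k m.sender).2 := by rw [hs]; exact hm'.2.1
          exact (ih m.sender).2.2.2 m h1 m' h2 (by rw [hm.1, hm'.1])
      have htr := A.trans_ok (dyn A σ d k i).1 (recvS A σ d k i) hvr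
      rw [dyn_succ]
      refine ⟨by rw [htr.1, (ih i).1], by rw [htr.2.1, (ih i).2.1], ?_, ?_⟩
      · intro m hm
        refine ⟨?_, ?_⟩
        · rw [(htr.2.2.2.2.1 m hm).1, (ih i).1]
        · rw [(htr.2.2.2.2.1 m hm).2, (ih i).2.1]
      · exact htr.2.2.2.2.2

lemma dyn_proc (σ : Fin n → Vi) (d : Fin n → ℕ∞) (k : ℕ) (i : Fin n) :
    A.proc (dyn A σ d k i).1 = i := (dyn_inv A σ d k i).1

lemma dyn_sender (σ : Fin n → Vi) (d : Fin n → ℕ∞) (k : ℕ) (i : Fin n)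
    {m : Message n} (hm : m ∈ (dyn A σ d k i).2) : m.sender = i :=
  ((dyn_inv A σ d k i).2.2.1 m hm).1

lemma dyn_round (σ : Fin n → Vi) (d : Fin n → ℕ∞) (k : ℕ) (i : Fin n)
    {m : Message n} (hm : m ∈ (dyn A σ d k i).2) : m.round = k + 1 :=
  ((dyn_inv A σ d k i).2.2.1 m hm).2

end TwoDefault

namespace TwoDefault

variable {n : ℕ} {Vi Vo : Type} (A : Algorithm n Vi Vo)

/-- The execution realizing the canonical dynamics where each deaf process
itself receive-omits all messages addressed to it from its deafness round on. -/
noncomputable def baseExec (σ : Fin n → Vi) (d : Fin n → ℕ∞) : Exec A where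
  faulty := {i | d i ≠ ⊤}
  st i j := (dyn A σ d (j-1) i).1
  sent i j := (dyn A σ d (j-1) i).2
  sendOmit _ _ := ∅
  recvd i j := recvS A σ d (j-1) i
  recvOmit i j := {m : Message n | m.receiver = i ∧
    m ∈ (dyn A σ d (j-1) m.sender).2 ∧ d i ≤ (j : ℕ∞)}


@[simp] lemma baseExec_faulty (σ : Fin n → Vi) (d : Fin n → ℕ∞) :
    (baseExec A σ d).faulty = {i | d i ≠ ⊤} := rfl
@[simp] lemma baseExec_st (σ : Fin n → Vi) (d : Fin n → ℕ∞) (i : Fin n) (j : ℕ) :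
    (baseExec A σ d).st i j = (dyn A σ d (j-1) i).1 := rfl
@[simp] lemma baseExec_sent (σ : Fin n → Vi) (d : Fin n → ℕ∞) (i : Fin n) (j : ℕ) :
    (baseExec A σ d).sent i j = (dyn A σ d (j-1) i).2 := rfl
@[simp] lemma baseExec_sendOmit (σ : Fin n → Vi) (d : Fin n → ℕ∞) (i : Fin n) (j : ℕ) :
    (baseExec A σ d).sendOmit i j = ∅ := rfl
@[simp] lemma baseExec_recvd (σ : Fin n → Vi) (d : Fin n → ℕ∞) (i : Fin n) (j : ℕ) :
    (baseExec A σ d).recvd i j = recvS A σ d (j-1) i := rfl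
@[simp] lemma baseExec_recvOmit (σ : Fin n → Vi) (d : Fin n → ℕ∞) (i : Fin n) (j : ℕ) :
    (baseExec A σ d).recvOmit i j = {m : Message n | m.receiver = i ∧
      m ∈ (dyn A σ d (j-1) m.sender).2 ∧ d i ≤ (j : ℕ∞)} := rfl
@[simp] lemma dyn_zero (σ : Fin n → Vi) (d : Fin n → ℕ∞) (i : Fin n) :
    dyn A σ d 0 i = (A.init i (σ i), A.initMsgs i (σ i)) := rfl

lemma sub_one_add_one {j : ℕ} (hj : 1 ≤ j) : (j - 1) + 1 = j :=
  Nat.succ_pred_eq_of_pos hj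

lemma baseExec_isExec (σ : Fin n → Vi) (d : Fin n → ℕ∞) (t : ℕ)
    (hcard : {i | d i ≠ ⊤}.encard ≤ (t : ℕ∞)) :
    IsExec t A ⊤ (baseExec A σ d) := by
  refine ⟨hcard, ?_, ?_, ?_, ?_, ?_, ?_⟩
  · -- initial states
    intro _ i
    exact ⟨σ i, rfl, by simp⟩
  · -- transitions
    intro i j hj _
    show A.trans (dyn A σ d (j-1) i).1 (recvS A σ d (j-1) i)
      = ((dyn A σ d (j+1-1) i).1, (dyn A σ d (j+1-1) i).2 ∪ ∅)
    have h1 : j + 1 - 1 = (j - 1) + 1 := by omega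
    rw [h1, dyn_succ, Set.union_empty]
  · -- well-formedness
    intro i j hj
    have hj1 : (j - 1) + 1 = j := sub_one_add_one hj.1
    simp only [baseExec_st, baseExec_sent, baseExec_sendOmit, baseExec_recvd,
      baseExec_recvOmit, Set.union_empty]
    refine ⟨dyn_proc A σ d _ i, by rw [(dyn_inv A σ d (j-1) i).2.1, hj1], ?_, ?_, ?_, ?_, ?_, ?_⟩
    · intro m hm
      exact ⟨dyn_sender A σ d _ i hm, by rw [dyn_round A σ d _ i hm, hj1]⟩
    · intro m hm
      rcases hm with hm | hm
      · exact ⟨hm.1, by rw [dyn_round A σ d _ _ hm.2.1, hj1]⟩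
      · exact ⟨hm.1, by rw [dyn_round A σ d _ _ hm.2.1, hj1]⟩
    · simp
    · -- recvd ∩ recvOmit = ∅
      ext m
      simp only [Set.mem_inter_iff, Set.mem_empty_iff_false, iff_false, not_and]
      intro h1 h2
      exact absurd h2.2.2 (by rw [← hj1] at h1 ⊢; exact fun h => h1.2.2 h)
    · intro m hm m' hm' h
      exact (dyn_inv A σ d (j-1) i).2.2.2 m hm m' hm' h
    · intro m hm m' hm' hs
      have h1 : m ∈ (dyn A σ d (j-1) m.sender).2 := by
        rcases hm with hm | hm; exacts [hm.2.1, hm.2.1]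
      have hr1 : m.receiver = i := by rcases hm with hm | hm; exacts [hm.1, hm.1]
      have h2 : m' ∈ (dyn A σ d (j-1) m.sender).2 := by
        rw [hs]; rcases hm' with hm' | hm'; exacts [hm'.2.1, hm'.2.1]
      have hr2 : m'.receiver = i := by rcases hm' with hm' | hm'; exacts [hm'.1, hm'.1]
      exact (dyn_inv A σ d (j-1) m.sender).2.2.2 m h1 m' h2 (by rw [hr1, hr2])
  · -- send-validity
    intro i j hj m hm
    simp only [baseExec_sent] at hm
    simp only [baseExec_recvd, baseExec_recvOmit]
    have hj1 : (j - 1) + 1 = j := sub_one_add_one hj.1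
    have hs : m.sender = i := dyn_sender A σ d _ i hm
    have hm' : m ∈ (dyn A σ d (j-1) m.sender).2 := by rw [hs]; exact hm
    by_cases hd : d m.receiver ≤ (j : ℕ∞)
    · right; exact ⟨rfl, hm', hd⟩
    · left; exact ⟨rfl, hm', by rw [hj1]; exact hd⟩
  · -- receive-validity
    intro i j hj m hm
    simp only [baseExec_recvd, baseExec_recvOmit] at hm
    show m ∈ (dyn A σ d (j-1) m.sender).2
    rcases hm with hm | hm; exacts [hm.2.1, hm.2.1]
  · -- omission-validity
    intro i hi
    simp only [baseExec_sendOmit, baseExec_recvOmit] at hi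
    rcases hi with ⟨j, hj, h⟩
    rcases h with h | h
    · exact absurd rfl h
    · rcases Set.nonempty_iff_ne_empty.2 h with ⟨m, hm⟩
      have : d i ≤ (j : ℕ∞) := hm.2.2
      intro hd
      rw [hd] at this
      exact absurd (top_le_iff.1 this).symm (by
        intro hc
        exact absurd hc (by simp))

end TwoDefault

namespace TwoDefault

variable {n : ℕ} {Vi Vo : Type} (A : Algorithm n Vi Vo)

/-- The set of processes that ever send a message to `g` in a round in which
`g` is deaf, under the canonical dynamics. -/
def sendersTo (σ : Fin n → Vi) (d : Fin n → ℕ∞) (g : Fin n) : Set (Fin n) :=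
  {x : Fin n | ∃ k : ℕ, ∃ m ∈ (dyn A σ d k x).2,
    m.receiver = g ∧ d g ≤ ((k+1 : ℕ) : ℕ∞)}

/-- The execution with the same dynamics as `baseExec A σ d` in which the deaf
process `g` is correct: all messages addressed to `g` in rounds where `g` is
deaf are send-omitted by their senders instead of receive-omitted by `g`. -/
noncomputable def hybExec (σ : Fin n → Vi) (d : Fin n → ℕ∞) (g : Fin n) : Exec A where
  faulty := ({i | d i ≠ ⊤} \ {g}) ∪ sendersTo A σ d g
  st i j := (dyn A σ d (j-1) i).1
  sent i j := (dyn A σ d (j-1) i).2 \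
    {m : Message n | m.receiver = g ∧ d g ≤ (j : ℕ∞)}
  sendOmit i j := (dyn A σ d (j-1) i).2 ∩
    {m : Message n | m.receiver = g ∧ d g ≤ (j : ℕ∞)}
  recvd i j := recvS A σ d (j-1) i
  recvOmit i j := {m : Message n | m.receiver = i ∧ i ≠ g ∧
    m ∈ (dyn A σ d (j-1) m.sender).2 ∧ d i ≤ (j : ℕ∞)}

@[simp] lemma hybExec_faulty (σ : Fin n → Vi) (d : Fin n → ℕ∞) (g : Fin n) :
    (hybExec A σ d g).faulty = ({i | d i ≠ ⊤} \ {g}) ∪ sendersTo A σ d g := rfl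
@[simp] lemma hybExec_st (σ : Fin n → Vi) (d : Fin n → ℕ∞) (g i : Fin n) (j : ℕ) :
    (hybExec A σ d g).st i j = (dyn A σ d (j-1) i).1 := rfl
@[simp] lemma hybExec_sent (σ : Fin n → Vi) (d : Fin n → ℕ∞) (g i : Fin n) (j : ℕ) :
    (hybExec A σ d g).sent i j = (dyn A σ d (j-1) i).2 \
      {m : Message n | m.receiver = g ∧ d g ≤ (j : ℕ∞)} := rfl
@[simp] lemma hybExec_sendOmit (σ : Fin n → Vi) (d : Fin n → ℕ∞) (g i : Fin n) (j : ℕ) :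
    (hybExec A σ d g).sendOmit i j = (dyn A σ d (j-1) i).2 ∩
      {m : Message n | m.receiver = g ∧ d g ≤ (j : ℕ∞)} := rfl
@[simp] lemma hybExec_recvd (σ : Fin n → Vi) (d : Fin n → ℕ∞) (g i : Fin n) (j : ℕ) :
    (hybExec A σ d g).recvd i j = recvS A σ d (j-1) i := rfl
@[simp] lemma hybExec_recvOmit (σ : Fin n → Vi) (d : Fin n → ℕ∞) (g i : Fin n) (j : ℕ) :
    (hybExec A σ d g).recvOmit i j = {m : Message n | m.receiver = i ∧ i ≠ g ∧
      m ∈ (dyn A σ d (j-1) m.sender).2 ∧ d i ≤ (j : ℕ∞)} := rfl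

lemma g_notMem_sendersTo (σ : Fin n → Vi) (d : Fin n → ℕ∞) (g : Fin n) :
    g ∉ sendersTo A σ d g := by
  rintro ⟨k, m, hm, hrec, -⟩
  exact m.ne (by rw [dyn_sender A σ d k g hm, hrec])

lemma g_notMem_hybFaulty (σ : Fin n → Vi) (d : Fin n → ℕ∞) (g : Fin n) :
    g ∉ (hybExec A σ d g).faulty := by
  rw [hybExec_faulty]
  rintro (⟨-, hg⟩ | hg)
  · exact hg rfl
  · exact g_notMem_sendersTo A σ d g hg

lemma le_ne_top {e : ℕ∞} {j : ℕ} (h : e ≤ (j : ℕ∞)) : e ≠ ⊤ := by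
  intro he; rw [he] at h
  exact absurd (top_le_iff.1 h).symm (by simp)

lemma hybExec_isExec (σ : Fin n → Vi) (d : Fin n → ℕ∞) (g : Fin n) (t : ℕ)
    (hcard : (({i | d i ≠ ⊤} \ {g}) ∪ sendersTo A σ d g).encard ≤ (t : ℕ∞)) :
    IsExec t A ⊤ (hybExec A σ d g) := by
  refine ⟨hcard, ?_, ?_, ?_, ?_, ?_, ?_⟩
  · -- initial states
    intro _ i
    refine ⟨σ i, rfl, ?_⟩
    show ((dyn A σ d 0 i).2 \ _) ∪ ((dyn A σ d 0 i).2 ∩ _) = _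
    rw [Set.diff_union_inter]; rfl
  · -- transitions
    intro i j hj _
    show A.trans (dyn A σ d (j-1) i).1 (recvS A σ d (j-1) i)
      = ((dyn A σ d (j+1-1) i).1,
        ((dyn A σ d (j+1-1) i).2 \ _) ∪ ((dyn A σ d (j+1-1) i).2 ∩ _))
    rw [Set.diff_union_inter]
    have h1 : j + 1 - 1 = (j - 1) + 1 := by omega
    rw [h1, dyn_succ]
  · -- well-formedness
    intro i j hj
    have hj1 : (j - 1) + 1 = j := sub_one_add_one hj.1
    simp only [hybExec_st, hybExec_sent, hybExec_sendOmit, hybExec_recvd,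
      hybExec_recvOmit, Set.diff_union_inter]
    refine ⟨dyn_proc A σ d _ i, by rw [(dyn_inv A σ d (j-1) i).2.1, hj1], ?_, ?_, ?_, ?_, ?_, ?_⟩
    · intro m hm
      exact ⟨dyn_sender A σ d _ i hm, by rw [dyn_round A σ d _ i hm, hj1]⟩
    · intro m hm
      rcases hm with hm | hm
      · exact ⟨hm.1, by rw [dyn_round A σ d _ _ hm.2.1, hj1]⟩
      · exact ⟨hm.1, by rw [dyn_round A σ d _ _ hm.2.2.1, hj1]⟩
    · refine Set.eq_empty_iff_forall_notMem.2 fun m hm => ?_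
      exact hm.1.2 hm.2.2
    · refine Set.eq_empty_iff_forall_notMem.2 fun m hm => ?_
      have h1 : ¬ d i ≤ (((j-1)+1 : ℕ) : ℕ∞) := hm.1.2.2
      refine h1 ?_
      rw [hj1]
      exact hm.2.2.2.2
    · intro m hm m' hm' h
      exact (dyn_inv A σ d (j-1) i).2.2.2 m hm m' hm' h
    · intro m hm m' hm' hs
      have h1 : m ∈ (dyn A σ d (j-1) m.sender).2 := by
        rcases hm with hm | hm; exacts [hm.2.1, hm.2.2.1]
      have hr1 : m.receiver = i := by rcases hm with hm | hm; exacts [hm.1, hm.1]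
      have h2 : m' ∈ (dyn A σ d (j-1) m.sender).2 := by
        rw [hs]; rcases hm' with hm' | hm'; exacts [hm'.2.1, hm'.2.2.1]
      have hr2 : m'.receiver = i := by rcases hm' with hm' | hm'; exacts [hm'.1, hm'.1]
      exact (dyn_inv A σ d (j-1) m.sender).2.2.2 m h1 m' h2 (by rw [hr1, hr2])
  · -- send-validity
    intro i j hj m hm
    simp only [hybExec_sent] at hm
    simp only [hybExec_recvd, hybExec_recvOmit]
    have hj1 : (j - 1) + 1 = j := sub_one_add_one hj.1
    have hs : m.sender = i := dyn_sender A σ d _ i hm.1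
    have hm' : m ∈ (dyn A σ d (j-1) m.sender).2 := by rw [hs]; exact hm.1
    rcases eq_or_ne m.receiver g with hrg | hrg
    · -- receiver is g: since the message was really sent, g is not deaf
      have hdg : ¬ d g ≤ (j : ℕ∞) := fun h => hm.2 ⟨hrg, h⟩
      left
      refine ⟨rfl, hm', ?_⟩
      rw [hj1, hrg]; exact hdg
    · by_cases hd : d m.receiver ≤ (j : ℕ∞)
      · right; exact ⟨rfl, hrg, hm', hd⟩
      · left; exact ⟨rfl, hm', by rw [hj1]; exact hd⟩
  · -- receive-validity
    intro i j hj m hm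
    simp only [hybExec_recvd, hybExec_recvOmit] at hm
    simp only [hybExec_sent]
    have hj1 : (j - 1) + 1 = j := sub_one_add_one hj.1
    rcases hm with hm | hm
    · refine ⟨hm.2.1, ?_⟩
      rintro ⟨hrg, hdg⟩
      rcases eq_or_ne i g with hig | hig
      · refine hm.2.2 ?_
        rw [hj1, hig]; exact hdg
      · exact hig (by rw [← hm.1, hrg])
    · refine ⟨hm.2.2.1, ?_⟩
      rintro ⟨hrg, -⟩
      exact hm.2.1 (by rw [← hm.1, hrg])
  · -- omission-validity
    intro i hi
    simp only [hybExec_sendOmit, hybExec_recvOmit, hybExec_faulty] at hi ⊢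
    rcases hi with ⟨j, hj, h⟩
    have hj1 : (j - 1) + 1 = j := sub_one_add_one hj.1
    rcases h with h | h
    · rcases Set.nonempty_iff_ne_empty.2 h with ⟨m, hm⟩
      right
      exact ⟨j - 1, m, hm.1, hm.2.1, by rw [hj1]; exact hm.2.2⟩
    · rcases Set.nonempty_iff_ne_empty.2 h with ⟨m, hm⟩
      left
      exact ⟨le_ne_top hm.2.2.2, hm.2.1⟩

end TwoDefault

namespace TwoDefault

variable {n : ℕ} {Vi Vo : Type} (A : Algorithm n Vi Vo)

lemma recvS_eq_empty_of_deaf {σ : Fin n → Vi} {d : Fin n → ℕ∞} {k : ℕ} {g : Fin n}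
    (h : d g ≤ ((k+1 : ℕ) : ℕ∞)) : recvS A σ d k g = ∅ :=
  Set.eq_empty_iff_forall_notMem.2 fun _ hm => hm.2.2 h

/-- Prefix determinism: if two deafness schedules agree except on processes
that are not deaf before round `s` in either, then the dynamics agree on
all rounds `≤ s`. -/
lemma dyn_prefix_eq (σ : Fin n → Vi) (d d' : Fin n → ℕ∞) (s : ℕ)
    (h : ∀ i, d i = d' i ∨ (((s:ℕ) : ℕ∞) ≤ d i ∧ ((s:ℕ) : ℕ∞) ≤ d' i)) :
    ∀ k, k < s → dyn A σ d k = dyn A σ d' k := by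
  intro k
  induction k with
  | zero => intro _; rfl
  | succ k ih =>
      intro hk
      have hks : k < s := Nat.lt_of_succ_lt hk
      have hdyn := ih hks
      funext i
      rw [dyn_succ, dyn_succ, hdyn]
      congr 1
      unfold recvS
      ext m
      simp only [Set.mem_setOf_eq]
      have hcond : (d i ≤ ((k+1 : ℕ) : ℕ∞)) ↔ (d' i ≤ ((k+1 : ℕ) : ℕ∞)) := by
        rcases h i with hi | ⟨hi1, hi2⟩
        · rw [hi]
        · have hlt : ((k+1 : ℕ) : ℕ∞) < ((s:ℕ) : ℕ∞) := by
            exact_mod_cast hk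
          constructor
          · intro hle; exact absurd (lt_of_lt_of_le hlt hi1) (not_lt.2 hle)
          · intro hle; exact absurd (lt_of_lt_of_le hlt hi2) (not_lt.2 hle)
      rw [hdyn, hcond]

/-- Anchor determinism: a process `g` deaf from round `≤ s+1` in both schedules
has the same state sequence if the schedules differ only on processes deaf
from round `≥ s` on in both. -/
lemma dyn_anchor_eq (σ : Fin n → Vi) (d d' : Fin n → ℕ∞) (s : ℕ) (g : Fin n)
    (h : ∀ i, d i = d' i ∨ (((s:ℕ) : ℕ∞) ≤ d i ∧ ((s:ℕ) : ℕ∞) ≤ d' i))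
    (hg : d g = d' g) (hgs : d g ≤ ((s:ℕ) : ℕ∞) + 1) :
    ∀ k, (dyn A σ d k g).1 = (dyn A σ d' k g).1 := by
  intro k
  induction k with
  | zero => rfl
  | succ k ih =>
      rw [dyn_succ, dyn_succ]
      by_cases hd : d g ≤ ((k+1 : ℕ) : ℕ∞)
      · rw [recvS_eq_empty_of_deaf A hd, recvS_eq_empty_of_deaf A (by rw [← hg]; exact hd),
          ih]
      · have hks : k < s := by
          have h1 : ((k+1 : ℕ) : ℕ∞) < d g := lt_of_not_ge hd
          have h2 : ((k+1 : ℕ) : ℕ∞) < ((s:ℕ) : ℕ∞) + 1 := lt_of_lt_of_le h1 hgs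
          have h3 : ((k+1 : ℕ) : ℕ∞) < (((s+1 :ℕ)) : ℕ∞) := by
            rw [Nat.cast_add, Nat.cast_one]; exact h2
          have := (Nat.cast_lt (α := ℕ∞)).1 h3
          omega
        have hdyn := dyn_prefix_eq A σ d d' s h k hks
        have hrecv : recvS A σ d k g = recvS A σ d' k g := by
          unfold recvS
          ext m
          simp only [Set.mem_setOf_eq]
          rw [hdyn, hg]
        rw [ih, hrecv]

/-- A process deaf from round 1 has a state sequence depending only on its
own proposal. -/
lemma dyn_blind_eq (σ σ' : Fin n → Vi) (d d' : Fin n → ℕ∞) (g : Fin n)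
    (hσ : σ g = σ' g) (h1 : d g = 1) (h1' : d' g = 1) :
    ∀ k, (dyn A σ d k g).1 = (dyn A σ' d' k g).1 := by
  intro k
  induction k with
  | zero => simp [dyn_zero, hσ]
  | succ k ih =>
      rw [dyn_succ, dyn_succ,
        recvS_eq_empty_of_deaf A (by rw [h1]; exact_mod_cast Nat.succ_le_succ (Nat.zero_le k)),
        recvS_eq_empty_of_deaf A (by rw [h1']; exact_mod_cast Nat.succ_le_succ (Nat.zero_le k)), ih]

/-- The all-`⊤` (nobody deaf) schedule. -/
def nodeaf : Fin n → ℕ∞ := fun _ => ⊤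

@[simp] lemma nodeaf_apply (i : Fin n) : (nodeaf i : ℕ∞) = ⊤ := rfl

lemma nodeaf_faulty : {i : Fin n | nodeaf i ≠ ⊤} = ∅ := by
  simp [nodeaf]

/-- Determinism for all-correct executions: any valid execution with no
faulty processes realizes the canonical dynamics of its proposal vector
with the `nodeaf` schedule. -/
lemma allCorrect_eq_dyn (E : Exec A) (t : ℕ) (hE : IsExec t A ⊤ E)
    (hf : E.faulty = ∅) :
    ∀ k i, E.st i (k+1) = (dyn A (fun i => A.prop (E.st i 1)) nodeaf k i).1 ∧
      E.sent i (k+1) = (dyn A (fun i => A.prop (E.st i 1)) nodeaf k i).2 := by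
  set σ : Fin n → Vi := fun i => A.prop (E.st i 1) with hσ
  have hso : ∀ i j, 1 ≤ j → E.sendOmit i j = ∅ := by
    intro i j hj
    by_contra hne
    have := hE.2.2.2.2.2.2 i ⟨j, ⟨hj, le_top⟩, Or.inl hne⟩
    rw [hf] at this; exact this
  have hro : ∀ i j, 1 ≤ j → E.recvOmit i j = ∅ := by
    intro i j hj
    by_contra hne
    have := hE.2.2.2.2.2.2 i ⟨j, ⟨hj, le_top⟩, Or.inr hne⟩
    rw [hf] at this; exact this
  have hinit : ∀ i, E.st i 1 = A.init i (σ i) ∧ E.sent i 1 = A.initMsgs i (σ i) := by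
    intro i
    obtain ⟨v, hst, hsent⟩ := hE.2.1 le_top i
    have hv : v = σ i := by rw [hσ]; simp only; rw [hst, A.init_prop]
    subst hv
    refine ⟨hst, ?_⟩
    rw [← hsent, hso i 1 le_rfl, Set.union_empty]
  intro k
  induction k with
  | zero =>
      intro i
      exact ⟨(hinit i).1, (hinit i).2⟩
  | succ k ih =>
      intro i
      have hrecvd : E.recvd i (k+1) = recvS A σ nodeaf k i := by
        ext m
        constructor
        · intro hm
          have hsent := hE.2.2.2.2.2.1 i (k+1) ⟨Nat.succ_le_succ (Nat.zero_le k), le_top⟩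
            m (Or.inl hm)
          have hrec := (hE.2.2.2.1 i (k+1) ⟨Nat.succ_le_succ (Nat.zero_le k), le_top⟩).2.2.2.1
            m (Or.inl hm)
          refine ⟨hrec.1, ?_, fun hle => absurd (nodeaf_apply i) (le_ne_top hle)⟩
          rw [← (ih m.sender).2]; exact hsent
        · intro hm
          have hm2 : m ∈ E.sent m.sender (k+1) := by
            rw [(ih m.sender).2]; exact hm.2.1
          have := hE.2.2.2.2.1 m.sender (k+1) ⟨Nat.succ_le_succ (Nat.zero_le k), le_top⟩
            m hm2
          rw [hro m.receiver (k+1) (Nat.succ_le_succ (Nat.zero_le k)), Set.union_empty,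
            hm.1] at this
          exact this
      have htr := hE.2.2.1 i (k+1) (Nat.succ_le_succ (Nat.zero_le k)) le_top
      rw [hrecvd, (ih i).1] at htr
      have : dyn A σ nodeaf (k+1) i
          = (E.st i (k+1+1), E.sent i (k+1+1) ∪ E.sendOmit i (k+1+1)) := by
        rw [dyn_succ]; exact htr
      rw [hso i (k+1+1) (by omega), Set.union_empty] at this
      exact ⟨by rw [this], by rw [this]⟩

end TwoDefault

namespace TwoDefault

variable {n : ℕ} {Vi Vo : Type} (A : Algorithm n Vi Vo) (t : ℕ)

lemma exists_not_mem {t : ℕ} (htn : t < n) (S : Set (Fin n)) (h : S.encard ≤ (t : ℕ∞)) :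
    ∃ i, i ∉ S := by
  by_contra hc
  push_neg at hc
  have hS : S = Set.univ := Set.eq_univ_iff_forall.2 hc
  rw [hS, Set.encard_univ] at h
  have : ((n : ℕ) : ℕ∞) ≤ (t : ℕ∞) := by
    rw [ENat.card_eq_coe_fintype_card, Fintype.card_fin] at h
    exact h
  exact absurd (Nat.cast_le.1 this) (not_le.2 htn)

/-- `v` is the common decision value of the correct processes of `E`. -/
def IsVal (E : Exec A) (v : Vo) : Prop :=
  ∀ i, i ∉ E.faulty → Decides ⊤ E i v

section TA

variable (hTA : ∀ E : Exec A, IsExec t A ⊤ E →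
      (∀ i, i ∉ E.faulty → ∃ v, Decides ⊤ E i v) ∧
      (∀ i i' v v', i ∉ E.faulty → i' ∉ E.faulty →
        Decides ⊤ E i v → Decides ⊤ E i' v' → v = v'))
variable (htn : t < n)

include hTA htn in
lemma exists_isVal (E : Exec A) (hE : IsExec t A ⊤ E) : ∃ v, IsVal A E v := by
  obtain ⟨i₀, hi₀⟩ := exists_not_mem htn E.faulty hE.1
  obtain ⟨v, hv⟩ := (hTA E hE).1 i₀ hi₀
  refine ⟨v, fun i hi => ?_⟩
  obtain ⟨w, hw⟩ := (hTA E hE).1 i hi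
  have := (hTA E hE).2 i i₀ w v hi hi₀ hw hv
  rw [← this]
  exact hw

include hTA htn in
lemma isVal_unique (E : Exec A) (hE : IsExec t A ⊤ E) {v v' : Vo}
    (h1 : IsVal A E v) (h2 : IsVal A E v') : v = v' := by
  obtain ⟨i₀, hi₀⟩ := exists_not_mem htn E.faulty hE.1
  exact (hTA E hE).2 i₀ i₀ v v' hi₀ hi₀ (h1 i₀ hi₀) (h2 i₀ hi₀)

lemma decides_transfer {E E' : Exec A} {i : Fin n} {v : Vo}
    (h : ∀ j, 1 ≤ j → E.st i j = E'.st i j) (hd : Decides ⊤ E i v) :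
    Decides ⊤ E' i v := by
  obtain ⟨j, hj, hdec⟩ := hd
  exact ⟨j, hj, by rw [← h j hj.1]; exact hdec⟩

include hTA in
/-- The key transfer lemma: if a process `g` has the same state sequence in
the dynamics of `(σ, d)` and of `(σ', d')`, and `g` can be made correct in
both (valid hybrid executions), then the common correct decision values of
the two base executions coincide. -/
lemma val_eq_of_anchor (σ σ' : Fin n → Vi) (d d' : Fin n → ℕ∞) (g : Fin n)
    (hH : IsExec t A ⊤ (hybExec A σ d g)) (hH' : IsExec t A ⊤ (hybExec A σ' d' g))
    (hstates : ∀ k, (dyn A σ d k g).1 = (dyn A σ' d' k g).1)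
    (hz : ∃ z, z ∉ (baseExec A σ d).faulty ∧ z ∉ (hybExec A σ d g).faulty)
    (hz' : ∃ z', z' ∉ (baseExec A σ' d').faulty ∧ z' ∉ (hybExec A σ' d' g).faulty)
    {v v' : Vo} (hv : IsVal A (baseExec A σ d) v) (hv' : IsVal A (baseExec A σ' d') v') :
    v = v' := by
  obtain ⟨z, hz1, hz2⟩ := hz
  obtain ⟨z', hz1', hz2'⟩ := hz'
  -- z decides v in the hybrid execution
  have hdz : Decides ⊤ (hybExec A σ d g) z v :=
    decides_transfer A (E := baseExec A σ d) (fun j hj => rfl) (hv z hz1)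
  -- hence g decides v in the hybrid execution
  have hgcor := g_notMem_hybFaulty A σ d g
  obtain ⟨w, hw⟩ := (hTA _ hH).1 g hgcor
  have hwv : v = w := (hTA _ hH).2 z g v w hz2 hgcor hdz hw
  have hgv : Decides ⊤ (hybExec A σ d g) g v := by rw [hwv]; exact hw
  -- transfer g's decision to the primed hybrid execution
  have hgv' : Decides ⊤ (hybExec A σ' d' g) g v :=
    decides_transfer A (fun j hj => by
      simp only [hybExec_st]; exact hstates (j-1)) hgv
  -- z' decides v' in the primed hybrid execution
  have hdz' : Decides ⊤ (hybExec A σ' d' g) z' v' :=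
    decides_transfer A (E := baseExec A σ' d') (fun j hj => rfl) (hv' z' hz1')
  exact (hTA _ hH').2 g z' v v' (g_notMem_hybFaulty A σ' d' g) hz2' hgv' hdz'

end TA

end TwoDefault

namespace TwoDefault

variable {n : ℕ} {Vi Vo : Type} (A : Algorithm n Vi Vo)

/-- The messages sent by never-deaf (correct) processes to `g` in rounds in
which `g` is deaf, under the canonical dynamics. -/
def MsgsTo (σ : Fin n → Vi) (d : Fin n → ℕ∞) (g : Fin n) : Set (Message n) :=
  {m : Message n | m.receiver = g ∧ d m.sender = ⊤ ∧
    ∃ k : ℕ, m ∈ (dyn A σ d k m.sender).2 ∧ d g ≤ ((k+1 : ℕ) : ℕ∞)}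

lemma sendersTo_subset (σ : Fin n → Vi) (d : Fin n → ℕ∞) (g : Fin n) :
    sendersTo A σ d g ⊆ {i | d i ≠ ⊤} ∪ Message.sender '' MsgsTo A σ d g := by
  rintro x ⟨k, m, hm, hrec, hk⟩
  by_cases hx : d x = ⊤
  · right
    have hms : m.sender = x := dyn_sender A σ d k x hm
    refine ⟨m, ⟨hrec, ?_, k, ?_, hk⟩, hms⟩
    · rw [hms]; exact hx
    · rw [hms]; exact hm
  · left; exact hx

lemma msgsTo_subset_msgCount (σ : Fin n → Vi) (d : Fin n → ℕ∞) (g : Fin n) :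
    MsgsTo A σ d g ⊆
      {m : Message n | ∃ i, i ∉ (baseExec A σ d).faulty ∧
        ∃ j, 1 ≤ j ∧ m ∈ (baseExec A σ d).sent i j} := by
  rintro m ⟨hrec, hcor, k, hm, hk⟩
  refine ⟨m.sender, ?_, k+1, Nat.succ_le_succ (Nat.zero_le k), ?_⟩
  · rw [baseExec_faulty]; simp only [Set.mem_setOf_eq, not_not]; exact hcor
  · rw [baseExec_sent]
    simpa using hm

lemma msgsTo_disjoint (σ : Fin n → Vi) (d : Fin n → ℕ∞) {g g' : Fin n}
    (h : g ≠ g') : Disjoint (MsgsTo A σ d g) (MsgsTo A σ d g') := by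
  rw [Set.disjoint_left]
  rintro m ⟨h1, -⟩ ⟨h2, -⟩
  exact h (by rw [← h1, ← h2])

lemma biUnion_card_le (σ : Fin n → Vi) (d : Fin n → ℕ∞) (c : ℕ)
    (D : Finset (Fin n))
    (hD : ∀ g ∈ D, ((c : ℕ) : ℕ∞) ≤ (MsgsTo A σ d g).encard) :
    ((D.card * c : ℕ) : ℕ∞) ≤ (⋃ g ∈ (D : Set (Fin n)), MsgsTo A σ d g).encard := by
  classical
  induction D using Finset.induction_on with
  | empty => simp
  | @insert a D ha ih =>
      have hunion : (⋃ g ∈ ((insert a D : Finset (Fin n)) : Set (Fin n)), MsgsTo A σ d g)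
          = MsgsTo A σ d a ∪ ⋃ g ∈ (D : Set (Fin n)), MsgsTo A σ d g := by
        simp [Set.biUnion_insert]
      have hdisj : Disjoint (MsgsTo A σ d a) (⋃ g ∈ (D : Set (Fin n)), MsgsTo A σ d g) := by
        rw [Set.disjoint_iUnion_right]
        intro g
        rw [Set.disjoint_iUnion_right]
        intro hg
        exact msgsTo_disjoint A σ d (fun h => ha (h ▸ hg))
      rw [hunion, Set.encard_union_eq hdisj, Finset.card_insert_of_notMem ha]
      have h1 := hD a (Finset.mem_insert_self a D)
      have h2 := ih (fun g hg => hD g (Finset.mem_insert_of_mem hg))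
      calc (((D.card + 1) * c : ℕ) : ℕ∞) = ((c + D.card * c : ℕ) : ℕ∞) := by ring_nf
        _ = ((c : ℕ) : ℕ∞) + ((D.card * c : ℕ) : ℕ∞) := by push_cast; ring
        _ ≤ _ := add_le_add h1 h2

/-- Pigeonhole: among `2u` deaf processes there is one receiving at most `4u`
messages from correct processes while deaf, in both given executions. -/
lemma exists_good_pair (σ σ' : Fin n → Vi) (d d' : Fin n → ℕ∞) (u : ℕ)
    (C : Finset (Fin n)) (hC : C.card = 2*u)
    (h1 : msgCount (baseExec A σ d) < ((2*u^2 : ℕ) : ℕ∞))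
    (h2 : msgCount (baseExec A σ' d') < ((2*u^2 : ℕ) : ℕ∞)) :
    ∃ g ∈ C, (MsgsTo A σ d g).encard ≤ ((4*u : ℕ) : ℕ∞) ∧
      (MsgsTo A σ' d' g).encard ≤ ((4*u : ℕ) : ℕ∞) := by
  classical
  by_contra hcon
  push_neg at hcon
  -- a one-sided contradiction lemma
  have key : ∀ (τ : Fin n → Vi) (e : Fin n → ℕ∞) (D : Finset (Fin n)),
      msgCount (baseExec A τ e) < ((2*u^2 : ℕ) : ℕ∞) →
      (∀ g ∈ D, ¬ (MsgsTo A τ e g).encard ≤ ((4*u : ℕ) : ℕ∞)) →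
      u ≤ D.card → False := by
    intro τ e D hmsg hbad hcard
    have hD : ∀ g ∈ D, (((4*u+1 : ℕ)) : ℕ∞) ≤ (MsgsTo A τ e g).encard := by
      intro g hg
      have := lt_of_not_ge (hbad g hg)
      rw [show ((4*u+1 : ℕ) : ℕ∞) = ((4*u : ℕ) : ℕ∞) + 1 by push_cast; ring]
      exact Order.add_one_le_of_lt this
    have hle := biUnion_card_le A τ e (4*u+1) D hD
    have hsub : (⋃ g ∈ (D : Set (Fin n)), MsgsTo A τ e g) ⊆
        {m : Message n | ∃ i, i ∉ (baseExec A τ e).faulty ∧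
          ∃ j, 1 ≤ j ∧ m ∈ (baseExec A τ e).sent i j} := by
      intro m hm
      rw [Set.mem_iUnion] at hm
      obtain ⟨g, hg⟩ := hm
      rw [Set.mem_iUnion] at hg
      obtain ⟨-, hg⟩ := hg
      exact msgsTo_subset_msgCount A τ e g hg
    have hlt : ((D.card * (4*u+1) : ℕ) : ℕ∞) < ((2*u^2 : ℕ) : ℕ∞) :=
      lt_of_le_of_lt (le_trans hle (Set.encard_mono hsub)) hmsg
    have hnat : D.card * (4*u+1) < 2*u^2 := by exact_mod_cast hlt
    nlinarith [hcard, Nat.mul_le_mul_right (4*u+1) hcard]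
  -- split C into the bad sets
  set C₁ := C.filter (fun g => ¬ (MsgsTo A σ d g).encard ≤ ((4*u : ℕ) : ℕ∞)) with hC₁
  set C₂ := C.filter (fun g => ¬ (MsgsTo A σ' d' g).encard ≤ ((4*u : ℕ) : ℕ∞)) with hC₂
  have hcover : C ⊆ C₁ ∪ C₂ := by
    intro g hg
    by_cases h : (MsgsTo A σ d g).encard ≤ ((4*u : ℕ) : ℕ∞)
    · exact Finset.mem_union_right _ (Finset.mem_filter.2 ⟨hg, not_le.2 (hcon g hg h)⟩)
    · exact Finset.mem_union_left _ (Finset.mem_filter.2 ⟨hg, h⟩)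
  have hsum : 2*u ≤ C₁.card + C₂.card := by
    calc 2*u = C.card := hC.symm
      _ ≤ (C₁ ∪ C₂).card := Finset.card_le_card hcover
      _ ≤ C₁.card + C₂.card := Finset.card_union_le _ _
  rcases le_or_gt u C₁.card with h | h
  · exact key σ d C₁ h1 (fun g hg => (Finset.mem_filter.1 hg).2) h
  · have : u ≤ C₂.card := by omega
    exact key σ' d' C₂ h2 (fun g hg => (Finset.mem_filter.1 hg).2) this

end TwoDefault

namespace TwoDefault

variable {n : ℕ} {Vi Vo : Type} (A : Algorithm n Vi Vo)

section Main

variable (u : ℕ)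
variable (hTA : ∀ E : Exec A, IsExec (8*u) A ⊤ E →
      (∀ i, i ∉ E.faulty → ∃ v, Decides ⊤ E i v) ∧
      (∀ i i' v v', i ∉ E.faulty → i' ∉ E.faulty →
        Decides ⊤ E i v → Decides ⊤ E i' v' → v = v'))
variable (htn : 8*u < n)

include hTA htn in
lemma val_eq_of_good_anchor (σ σ' : Fin n → Vi) (d d' : Fin n → ℕ∞) (g : Fin n)
    (G : Finset (Fin n)) (hGcard : G.card = 4*u)
    (hdG : {i | d i ≠ ⊤} = (G : Set (Fin n)))
    (hd'G : {i | d' i ≠ ⊤} = (G : Set (Fin n)))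
    (hgood : (MsgsTo A σ d g).encard ≤ ((4*u : ℕ) : ℕ∞))
    (hgood' : (MsgsTo A σ' d' g).encard ≤ ((4*u : ℕ) : ℕ∞))
    (hstates : ∀ k, (dyn A σ d k g).1 = (dyn A σ' d' k g).1)
    {v v' : Vo} (hv : IsVal A (baseExec A σ d) v)
    (hv' : IsVal A (baseExec A σ' d') v') : v = v' := by
  have hGenc : ((G : Set (Fin n))).encard = ((4*u : ℕ) : ℕ∞) := by
    rw [Set.encard_coe_eq_coe_finsetCard, hGcard]
  -- a generic bundle for one side
  have bundle : ∀ (τ : Fin n → Vi) (e : Fin n → ℕ∞),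
      {i | e i ≠ ⊤} = (G : Set (Fin n)) →
      (MsgsTo A τ e g).encard ≤ ((4*u : ℕ) : ℕ∞) →
      IsExec (8*u) A ⊤ (hybExec A τ e g) ∧
      ∃ z, z ∉ (baseExec A τ e).faulty ∧ z ∉ (hybExec A τ e g).faulty := by
    intro τ e heG hgd
    set Ssub : Set (Fin n) := (G : Set (Fin n)) ∪ Message.sender '' MsgsTo A τ e g
      with hSsub
    have hsub : ({i | e i ≠ ⊤} \ {g}) ∪ sendersTo A τ e g ⊆ Ssub := by
      apply Set.union_subset
      · exact Set.Subset.trans Set.diff_subset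
          (by rw [heG]; exact Set.subset_union_left)
      · refine Set.Subset.trans (sendersTo_subset A τ e g) ?_
        rw [heG]
    have hScard : Ssub.encard ≤ ((8*u : ℕ) : ℕ∞) := by
      refine le_trans (Set.encard_union_le _ _) ?_
      have himg : (Message.sender '' MsgsTo A τ e g).encard ≤ ((4*u : ℕ) : ℕ∞) :=
        le_trans (Set.encard_image_le _ _) hgd
      calc ((G : Set (Fin n))).encard + (Message.sender '' MsgsTo A τ e g).encard
          ≤ ((4*u : ℕ) : ℕ∞) + ((4*u : ℕ) : ℕ∞) := by
            rw [hGenc]; exact add_le_add le_rfl himg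
        _ = ((8*u : ℕ) : ℕ∞) := by push_cast; ring
    have hhyb : IsExec (8*u) A ⊤ (hybExec A τ e g) :=
      hybExec_isExec A τ e g (8*u) (le_trans (Set.encard_mono hsub) hScard)
    obtain ⟨z, hz⟩ := exists_not_mem htn Ssub hScard
    refine ⟨hhyb, z, ?_, ?_⟩
    · intro h
      rw [baseExec_faulty, heG] at h
      exact hz (Set.mem_union_left _ h)
    · intro h
      rw [hybExec_faulty] at h
      exact hz (hsub h)
  obtain ⟨hhyb, hz⟩ := bundle σ d hdG hgood
  obtain ⟨hhyb', hz'⟩ := bundle σ' d' hd'G hgood'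
  exact val_eq_of_anchor A (8*u) hTA σ σ' d d' g hhyb hhyb' hstates hz hz' hv hv'

end Main

end TwoDefault

namespace TwoDefault

variable {n : ℕ} {Vi Vo : Type} (A : Algorithm n Vi Vo)

/-- Uniform deafness schedule: all of `G` deaf from round `j`. -/
def dunif (G : Finset (Fin n)) (j : ℕ) : Fin n → ℕ∞ :=
  fun i => if i ∈ G then (j : ℕ∞) else ⊤

/-- Mixed schedule: `L` deaf from round `j`, `H` deaf from round `j+1`. -/
def dmix (L H : Finset (Fin n)) (j : ℕ) : Fin n → ℕ∞ :=
  fun i => if i ∈ L then (j : ℕ∞) else if i ∈ H then ((j+1 : ℕ) : ℕ∞) else ⊤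

lemma natCast_ne_top' (j : ℕ) : ((j : ℕ) : ℕ∞) ≠ ⊤ := le_ne_top le_rfl

lemma dunif_deafset (G : Finset (Fin n)) (j : ℕ) :
    {i | dunif G j i ≠ ⊤} = (G : Set (Fin n)) := by
  ext i
  simp only [Set.mem_setOf_eq, dunif, Finset.coe_mem, Finset.mem_coe]
  by_cases h : i ∈ G <;> simp [h, natCast_ne_top' j]

lemma dmix_deafset (L H : Finset (Fin n)) (j : ℕ) :
    {i | dmix L H j i ≠ ⊤} = ((L ∪ H : Finset (Fin n)) : Set (Fin n)) := by
  ext i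
  simp only [Set.mem_setOf_eq, dmix, Finset.coe_union, Set.mem_union, Finset.mem_coe]
  have hne : ((j:ℕ):ℕ∞) + 1 ≠ ⊤ := by
    rw [show ((j:ℕ):ℕ∞) + 1 = (((j+1:ℕ)):ℕ∞) by push_cast; ring]
    exact natCast_ne_top' (j+1)
  by_cases h1 : i ∈ L
  · simp [h1, natCast_ne_top' j]
  · by_cases h2 : i ∈ H <;> simp [h1, h2, hne]

section Main

variable (u : ℕ)
variable (hTA : ∀ E : Exec A, IsExec (8*u) A ⊤ E →
      (∀ i, i ∉ E.faulty → ∃ v, Decides ⊤ E i v) ∧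
      (∀ i i' v v', i ∉ E.faulty → i' ∉ E.faulty →
        Decides ⊤ E i v → Decides ⊤ E i' v' → v = v'))
variable (htn : 8*u < n)
variable (hB : ∀ E : Exec A, IsExec (8*u) A ⊤ E →
      msgCount E < ((2*u^2 : ℕ) : ℕ∞))
variable (G L H : Finset (Fin n)) (hGLH : G = L ∪ H) (hLH : Disjoint L H)
variable (hLcard : L.card = 2*u) (hHcard : H.card = 2*u)

lemma Gcard_eq (hGLH : G = L ∪ H) (hLH : Disjoint L H)
    (hLcard : L.card = 2*u) (hHcard : H.card = 2*u) : G.card = 4*u := by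
  rw [hGLH, Finset.card_union_of_disjoint hLH, hLcard, hHcard]; ring

lemma dmixG_deafset (hGLH : G = L ∪ H) (j : ℕ) :
    {i | dmix L H j i ≠ ⊤} = (G : Set (Fin n)) := by
  rw [dmix_deafset, hGLH]

lemma base_valid (σ : Fin n → Vi) (d : Fin n → ℕ∞)
    (hd : {i | d i ≠ ⊤} = (G : Set (Fin n))) (hGc : G.card = 4*u) :
    IsExec (8*u) A ⊤ (baseExec A σ d) := by
  apply baseExec_isExec
  rw [hd, Set.encard_coe_eq_coe_finsetCard, hGc]
  exact_mod_cast Nat.mul_le_mul_right u (by norm_num)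

include hTA htn hB hGLH hLH hLcard hHcard in
/-- One descent step: delaying the uniform deafness round from `j` to `j+1`
does not change the common correct decision value. -/
lemma step_eq (σ : Fin n → Vi) (j : ℕ) {v w : Vo}
    (hv : IsVal A (baseExec A σ (dunif G (j+1))) v)
    (hw : IsVal A (baseExec A σ (dunif G j)) w) : v = w := by
  have hGc : G.card = 4*u := Gcard_eq u G L H hGLH hLH hLcard hHcard
  have hLsub : ∀ i ∈ L, i ∈ G := by intro i hi; rw [hGLH]; exact Finset.mem_union_left _ hi
  have hHsub : ∀ i ∈ H, i ∈ G := by intro i hi; rw [hGLH]; exact Finset.mem_union_right _ hi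
  have hd1 := dunif_deafset G (j+1)
  have hd2 := dmixG_deafset G L H hGLH j
  have hd3 := dunif_deafset G j
  have hval1 := base_valid A u G σ (dunif G (j+1)) hd1 hGc
  have hval2 := base_valid A u G σ (dmix L H j) hd2 hGc
  have hval3 := base_valid A u G σ (dunif G j) hd3 hGc
  obtain ⟨x, hx⟩ := exists_isVal A (8*u) hTA htn _ hval2
  -- first transfer: dunif (j+1) vs dmix j, anchored in H
  have h1 : v = x := by
    obtain ⟨g, hgH, hgood1, hgood2⟩ := exists_good_pair A σ σ (dunif G (j+1))
      (dmix L H j) u H hHcard (hB _ hval1) (hB _ hval2)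
    have hprem : ∀ i, dunif G (j+1) i = dmix L H j i ∨
        (((j:ℕ) : ℕ∞) ≤ dunif G (j+1) i ∧ ((j:ℕ) : ℕ∞) ≤ dmix L H j i) := by
      intro i
      by_cases hiL : i ∈ L
      · right
        unfold dunif dmix
        rw [if_pos (hLsub i hiL), if_pos hiL]
        exact ⟨by exact_mod_cast Nat.le_succ j, le_rfl⟩
      · by_cases hiH : i ∈ H
        · left
          unfold dunif dmix
          rw [if_pos (hHsub i hiH), if_neg hiL, if_pos hiH]
        · left
          unfold dunif dmix
          rw [if_neg (fun hiG => by
            rw [hGLH] at hiG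
            rcases Finset.mem_union.1 hiG with h | h
            exacts [hiL h, hiH h]), if_neg hiL, if_neg hiH]
    have hgeq : dunif G (j+1) g = dmix L H j g := by
      unfold dunif dmix
      rw [if_pos (hHsub g hgH), if_neg (Finset.disjoint_right.1 hLH hgH), if_pos hgH]
    have hgs : dunif G (j+1) g ≤ ((j:ℕ) : ℕ∞) + 1 := by
      unfold dunif
      rw [if_pos (hHsub g hgH)]
      rw [show ((j:ℕ) : ℕ∞) + 1 = (((j+1 : ℕ)) : ℕ∞) by push_cast; ring]
    have hstates := dyn_anchor_eq A σ (dunif G (j+1)) (dmix L H j) j g hprem hgeq hgs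
    exact val_eq_of_good_anchor A u hTA htn σ σ (dunif G (j+1)) (dmix L H j) g G hGc
      hd1 hd2 hgood1 hgood2 hstates hv hx
  -- second transfer: dmix j vs dunif j, anchored in L
  have h2 : x = w := by
    obtain ⟨g, hgL, hgood1, hgood2⟩ := exists_good_pair A σ σ (dmix L H j)
      (dunif G j) u L hLcard (hB _ hval2) (hB _ hval3)
    have hprem : ∀ i, dmix L H j i = dunif G j i ∨
        (((j:ℕ) : ℕ∞) ≤ dmix L H j i ∧ ((j:ℕ) : ℕ∞) ≤ dunif G j i) := by
      intro i
      by_cases hiL : i ∈ L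
      · left
        unfold dunif dmix
        rw [if_pos hiL, if_pos (hLsub i hiL)]
      · by_cases hiH : i ∈ H
        · right
          unfold dunif dmix
          rw [if_neg hiL, if_pos hiH, if_pos (hHsub i hiH)]
          exact ⟨by exact_mod_cast Nat.le_succ j, le_rfl⟩
        · left
          unfold dunif dmix
          rw [if_neg hiL, if_neg hiH, if_neg (fun hiG => by
            rw [hGLH] at hiG
            rcases Finset.mem_union.1 hiG with h | h
            exacts [hiL h, hiH h])]
    have hgeq : dmix L H j g = dunif G j g := by
      unfold dunif dmix
      rw [if_pos hgL, if_pos (hLsub g hgL)]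
    have hgs : dmix L H j g ≤ ((j:ℕ) : ℕ∞) + 1 := by
      unfold dmix
      rw [if_pos hgL]
      exact le_self_add
    have hstates := dyn_anchor_eq A σ (dmix L H j) (dunif G j) j g hprem hgeq hgs
    exact val_eq_of_good_anchor A u hTA htn σ σ (dmix L H j) (dunif G j) g G hGc
      hd2 hd3 hgood1 hgood2 hstates hx hw
  rw [h1, h2]

include hTA htn hB hGLH hLH hLcard hHcard in
/-- Descent: the common correct decision value with all of `G` deaf from
round `K` equals the one with all of `G` deaf from round `1`. -/
lemma descent_eq (σ : Fin n → Vi) (K : ℕ) (hK : 1 ≤ K) {v w : Vo}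
    (hv : IsVal A (baseExec A σ (dunif G K)) v)
    (hw : IsVal A (baseExec A σ (dunif G 1)) w) : v = w := by
  have hGc : G.card = 4*u := Gcard_eq u G L H hGLH hLH hLcard hHcard
  have main : ∀ K, 1 ≤ K → ∀ v, IsVal A (baseExec A σ (dunif G K)) v → v = w := by
    intro K hK
    induction K, hK using Nat.le_induction with
    | base =>
        intro v hv
        exact isVal_unique A (8*u) hTA htn _
          (base_valid A u G σ (dunif G 1) (dunif_deafset G 1) hGc) hv hw
    | succ K hK1 ih =>
        intro v hv
        obtain ⟨x, hx⟩ := exists_isVal A (8*u) hTA htn _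
          (base_valid A u G σ (dunif G K) (dunif_deafset G K) hGc)
        exact (step_eq A u hTA htn hB G L H hGLH hLH hLcard hHcard σ K hv hx).trans
          (ih x hx)
  exact main K hK v hv

end Main

end TwoDefault

namespace TwoDefault

variable {n : ℕ} {Vi Vo : Type} (A : Algorithm n Vi Vo)

section Main2

variable (u : ℕ)
variable (hTA : ∀ E : Exec A, IsExec (8*u) A ⊤ E →
      (∀ i, i ∉ E.faulty → ∃ v, Decides ⊤ E i v) ∧
      (∀ i i' v v', i ∉ E.faulty → i' ∉ E.faulty →
        Decides ⊤ E i v → Decides ⊤ E i' v' → v = v'))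
variable (htn : 8*u < n)
variable (hB : ∀ E : Exec A, IsExec (8*u) A ⊤ E →
      msgCount E < ((2*u^2 : ℕ) : ℕ∞))
variable (G L H : Finset (Fin n)) (hGLH : G = L ∪ H) (hLH : Disjoint L H)
variable (hLcard : L.card = 2*u) (hHcard : H.card = 2*u)

include hTA htn hB hGLH hLH hLcard hHcard in
/-- The common correct decision value with all of `G` deaf from round 1
equals the decision value of the all-correct execution. -/
lemma unif1_val_eq_allval (σ : Fin n → Vi) {a v : Vo}
    (ha : IsVal A (baseExec A σ nodeaf) a)
    (hv : IsVal A (baseExec A σ (dunif G 1)) v) : v = a := by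
  have hGc : G.card = 4*u := Gcard_eq u G L H hGLH hLH hLcard hHcard
  -- a spectator outside G
  have hGenc : ((G : Set (Fin n))).encard ≤ ((8*u : ℕ) : ℕ∞) := by
    rw [Set.encard_coe_eq_coe_finsetCard, hGc]
    exact_mod_cast Nat.mul_le_mul_right u (by norm_num)
  obtain ⟨z, hz⟩ := exists_not_mem htn (G : Set (Fin n)) hGenc
  -- z decides a at some round K in the all-correct execution
  have hzdec : Decides ⊤ (baseExec A σ nodeaf) z a := by
    refine ha z ?_
    rw [baseExec_faulty, nodeaf_faulty]
    exact Set.notMem_empty z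
  obtain ⟨K, hK, hdec⟩ := hzdec
  -- z also decides a when G is deaf from round K
  have hprem : ∀ i, dunif G K i = nodeaf i ∨
      (((K:ℕ) : ℕ∞) ≤ dunif G K i ∧ ((K:ℕ) : ℕ∞) ≤ nodeaf i) := by
    intro i
    by_cases hiG : i ∈ G
    · right
      unfold dunif
      rw [if_pos hiG]
      exact ⟨le_rfl, le_top⟩
    · left
      unfold dunif nodeaf
      rw [if_neg hiG]
  have hK1 : 1 ≤ K := hK.1
  have hpre := dyn_prefix_eq A σ (dunif G K) nodeaf K hprem (K-1) (by omega)
  have hzdecK : Decides ⊤ (baseExec A σ (dunif G K)) z a := by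
    refine ⟨K, hK, ?_⟩
    rw [baseExec_st]
    have := congrFun hpre z
    rw [show (dyn A σ (dunif G K) (K-1) z).1 = (dyn A σ nodeaf (K-1) z).1 by rw [this]]
    rw [baseExec_st] at hdec
    exact hdec
  -- the common value at schedule `dunif G K` is `a`
  have hvalK := base_valid A u G σ (dunif G K) (dunif_deafset G K) hGc
  obtain ⟨x, hx⟩ := exists_isVal A (8*u) hTA htn _ hvalK
  have hzcor : z ∉ (baseExec A σ (dunif G K)).faulty := by
    rw [baseExec_faulty, dunif_deafset G K]
    exact hz
  have hxa : x = a :=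
    (hTA _ hvalK).2 z z x a hzcor hzcor (hx z hzcor) hzdecK
  -- descend from K to 1
  have := descent_eq A u hTA htn hB G L H hGLH hLH hLcard hHcard σ K hK1 hx hv
  rw [← hxa, this]

end Main2

end TwoDefault


open TwoDefault

/-- Let `A` be a deterministic algorithm in the omission
model (with `8 ≤ t < n`, `8 ∣ t`) all of whose infinite executions satisfy
Termination and Agreement, and suppose two infinite executions `E₀`, `E₁` of
`A` with all processes correct decide two different values `v₀ ≠ v₁`.
Then `A` has message complexity at least `t² / 32`. -/
theorem two_default_decisions_message_lower_bound
    (n t : ℕ) (ht8 : 8 ≤ t) (htn : t < n) (hdvd : 8 ∣ t)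
    (Vi Vo : Type) [Nonempty Vi]
    (A : Algorithm n Vi Vo)
    -- Termination and Agreement in every infinite execution
    (hTA : ∀ E : Exec A, IsExec t A ⊤ E →
      (∀ i, i ∉ E.faulty → ∃ v, Decides ⊤ E i v) ∧
      (∀ i i' v v', i ∉ E.faulty → i' ∉ E.faulty →
        Decides ⊤ E i v → Decides ⊤ E i' v' → v = v'))
    (E₀ : Exec A) (hE₀ : IsExec t A ⊤ E₀) (hc₀ : E₀.faulty = ∅)
    (E₁ : Exec A) (hE₁ : IsExec t A ⊤ E₁) (hc₁ : E₁.faulty = ∅)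
    (v₀ v₁ : Vo)
    (hd₀ : ∃ i, Decides ⊤ E₀ i v₀) (hd₁ : ∃ i, Decides ⊤ E₁ i v₁)
    (hne : v₀ ≠ v₁) :
    ((t ^ 2 / 32 : ℕ) : ℕ∞) ≤ MsgComplexity t A := by

  classical
  obtain ⟨u, rfl⟩ := hdvd
  have hu : 1 ≤ u := by omega
  by_contra hcon
  have hdiv : (8*u)^2/32 = 2*u^2 := by
    have h1 : (8*u)^2 = 32*(2*u^2) := by ring
    rw [h1, Nat.mul_div_cancel_left _ (by norm_num : (0:ℕ) < 32)]
  have hB : ∀ E : Exec A, IsExec (8*u) A ⊤ E →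
      msgCount E < ((2*u^2 : ℕ) : ℕ∞) := by
    intro E hE
    have h1 : msgCount E ≤ MsgComplexity (8*u) A :=
      le_iSup (fun E : {E : Exec A // IsExec (8*u) A ⊤ E} => msgCount E.1) ⟨E, hE⟩
    have h2 : MsgComplexity (8*u) A < (((8*u)^2/32 : ℕ) : ℕ∞) := not_le.1 hcon
    rw [hdiv] at h2
    exact lt_of_le_of_lt h1 h2
  -- the proposal vectors of the two all-correct executions
  set σ0 : Fin n → Vi := fun i => A.prop (E₀.st i 1) with hσ0
  set σ1 : Fin n → Vi := fun i => A.prop (E₁.st i 1) with hσ1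
  have hnodeafvalid : ∀ σ : Fin n → Vi, IsExec (8*u) A ⊤ (baseExec A σ nodeaf) := by
    intro σ
    apply baseExec_isExec
    rw [nodeaf_faulty]
    simp
  -- transferring the decided values to the canonical all-correct runs
  have hval_trans : ∀ (E : Exec A), IsExec (8*u) A ⊤ E → E.faulty = ∅ →
      ∀ v : Vo, (∃ i, Decides ⊤ E i v) →
      IsVal A (baseExec A (fun i => A.prop (E.st i 1)) nodeaf) v := by
    intro E hE hc v hd
    obtain ⟨i₀, hi₀⟩ := hd
    have hdyn := allCorrect_eq_dyn A E (8*u) hE hc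
    have hdec : Decides ⊤ (baseExec A (fun i => A.prop (E.st i 1)) nodeaf) i₀ v := by
      refine decides_transfer A (E := E) (fun j hj => ?_) hi₀
      rw [baseExec_st]
      have h := (hdyn (j-1) i₀).1
      rw [sub_one_add_one hj] at h
      exact h
    intro i hi
    obtain ⟨w, hw⟩ := (hTA _ (hnodeafvalid _)).1 i hi
    have hi₀cor : i₀ ∉ (baseExec A (fun i => A.prop (E.st i 1)) nodeaf).faulty := by
      rw [baseExec_faulty, nodeaf_faulty]
      exact Set.notMem_empty i₀
    have := (hTA _ (hnodeafvalid _)).2 i i₀ w v hi hi₀cor hw hdec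
    rw [← this]
    exact hw
  have hval0 : IsVal A (baseExec A σ0 nodeaf) v₀ := hval_trans E₀ hE₀ hc₀ v₀ hd₀
  have hval1 : IsVal A (baseExec A σ1 nodeaf) v₁ := hval_trans E₁ hE₁ hc₁ v₁ hd₁
  -- the canonical decision value of every proposal vector
  have DvS : ∀ σ : Fin n → Vi, ∃ v, IsVal A (baseExec A σ nodeaf) v := fun σ =>
    exists_isVal A (8*u) hTA htn _ (hnodeafvalid σ)
  set Dv : (Fin n → Vi) → Vo := fun σ => Classical.choose (DvS σ) with hDvdef
  have DvSpec : ∀ σ, IsVal A (baseExec A σ nodeaf) (Dv σ) := fun σ =>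
    Classical.choose_spec (DvS σ)
  have hDv0 : Dv σ0 = v₀ :=
    isVal_unique A (8*u) hTA htn _ (hnodeafvalid σ0) (DvSpec σ0) hval0
  have hDv1 : Dv σ1 = v₁ :=
    isVal_unique A (8*u) hTA htn _ (hnodeafvalid σ1) (DvSpec σ1) hval1
  -- hybridization over the proposal vectors
  set mix : ℕ → Fin n → Vi := fun m i => if (i : ℕ) < m then σ1 i else σ0 i with hmixdef
  have hmix0 : mix 0 = σ0 := by funext i; simp [hmixdef]
  have hmixn : mix n = σ1 := by funext i; simp [hmixdef, i.isLt]
  have hchain : ∃ m, m < n ∧ Dv (mix m) ≠ Dv (mix (m+1)) := by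
    by_contra hc
    push_neg at hc
    have hall : ∀ k, k ≤ n → Dv (mix 0) = Dv (mix k) := by
      intro k
      induction k with
      | zero => intro _; rfl
      | succ k ih =>
          intro hk
          rw [ih (by omega), hc k (by omega)]
    have := hall n le_rfl
    rw [hmix0, hmixn, hDv0, hDv1] at this
    exact hne this
  obtain ⟨m, hm, hmne⟩ := hchain
  set p : Fin n := ⟨m, hm⟩ with hpdef
  have hagree : ∀ i : Fin n, i ≠ p → mix m i = mix (m+1) i := by
    intro i hip
    have him : (i : ℕ) ≠ m := fun h => hip (Fin.ext h)
    simp only [hmixdef]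
    by_cases h : (i:ℕ) < m
    · rw [if_pos h, if_pos (by omega)]
    · rw [if_neg h, if_neg (by omega)]
  -- choose the deaf group: 4u processes avoiding p, split in two halves
  have hcard_erase : 4*u ≤ (Finset.univ.erase p).card := by
    rw [Finset.card_erase_of_mem (Finset.mem_univ p), Finset.card_univ, Fintype.card_fin]
    omega
  obtain ⟨G, hGsub, hGcard⟩ := Finset.exists_subset_card_eq hcard_erase
  obtain ⟨L, hLsub, hLcard⟩ := Finset.exists_subset_card_eq (show 2*u ≤ G.card by rw [hGcard]; omega)
  have hLH : Disjoint L (G \ L) := Finset.disjoint_sdiff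
  have hGLH : G = L ∪ (G \ L) := (Finset.union_sdiff_of_subset hLsub).symm
  have hHcard : (G \ L).card = 2*u := by
    rw [Finset.card_sdiff_of_subset hLsub, hGcard, hLcard]; omega
  have hpG : p ∉ G := fun h => (Finset.mem_erase.1 (hGsub h)).1 rfl
  have hGc4 : G.card = 4*u := hGcard
  -- the common correct decision values with G deaf from round 1
  have hval_unif : ∀ σ : Fin n → Vi, IsExec (8*u) A ⊤ (baseExec A σ (dunif G 1)) :=
    fun σ => base_valid A u G σ (dunif G 1) (dunif_deafset G 1) hGc4
  obtain ⟨va, hva⟩ := exists_isVal A (8*u) hTA htn _ (hval_unif (mix m))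
  obtain ⟨vb, hvb⟩ := exists_isVal A (8*u) hTA htn _ (hval_unif (mix (m+1)))
  have h1 : va = Dv (mix m) :=
    unif1_val_eq_allval A u hTA htn hB G L (G \ L) hGLH hLH hLcard hHcard
      (mix m) (DvSpec (mix m)) hva
  have h2 : vb = Dv (mix (m+1)) :=
    unif1_val_eq_allval A u hTA htn hB G L (G \ L) hGLH hLH hLcard hHcard
      (mix (m+1)) (DvSpec (mix (m+1))) hvb
  -- the bottom cross: a blind anchor in L ties the two values together
  have h3 : va = vb := by
    obtain ⟨g, hgL, hgood1, hgood2⟩ := exists_good_pair A (mix m) (mix (m+1))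
      (dunif G 1) (dunif G 1) u L hLcard (hB _ (hval_unif (mix m)))
      (hB _ (hval_unif (mix (m+1))))
    have hgG : g ∈ G := hLsub hgL
    have hg1 : dunif G 1 g = 1 := by
      unfold dunif
      rw [if_pos hgG]
      exact Nat.cast_one
    have hstates := dyn_blind_eq A (mix m) (mix (m+1)) (dunif G 1) (dunif G 1) g
      (hagree g (fun h => hpG (h ▸ hgG))) hg1 hg1
    exact val_eq_of_good_anchor A u hTA htn (mix m) (mix (m+1))
      (dunif G 1) (dunif G 1) g G hGc4 (dunif_deafset G 1) (dunif_deafset G 1)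
      hgood1 hgood2 hstates hva hvb
  exact hmne (by rw [← h1, ← h2, h3])
end

section
/- Let 𝒜 be a deterministic algorithm that solves the val-agreement problem in the omission model for a validity property val, let E be a (finite or infinite) execution of 𝒜, and let c ∈ I be an input configuration such that the set of correct processes of E equals π(c) and every correct process p_i proposes c(p_i) in E. If some correct process decides a value v' ∈ V_O in E, then v' ∈ val(c') for every c' ∈ Cnt(c), i.e., v' ∈ ⋂_{c' ∈ Cnt(c)} val(c'). -/
/-- An input configuration: an assignment of proposals to at least `n - t`
processes (`none` marks processes outside the domain `π(c)`). -/
def IsInputConf (n t : ℕ) {Vi : Type} (c : Fin n → Option Vi) : Prop :=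
  n - t ≤ {i | c i ≠ none}.ncard

/-- The containment relation `c ⊒ c'` between input configurations. -/
def Contains {n : ℕ} {Vi : Type} (c c' : Fin n → Option Vi) : Prop :=
  ∀ i, c' i ≠ none → c i = c' i

/-- The execution `E` corresponds to the input configuration `c`: the correct
processes of `E` are exactly those in `π(c)`, and each of them proposes its
value prescribed by `c`. -/
def CorrespondsTo {n : ℕ} {Vi Vo : Type} {A : Algorithm n Vi Vo}
    (E : Exec A) (c : Fin n → Option Vi) : Prop :=
  ∀ i, (i ∉ E.faulty → c i = some (A.prop (E.st i 1))) ∧ (i ∈ E.faulty → c i = none)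

/-- `A` solves the `val`-agreement problem in the omission model, tolerating
`t` omission-faulty processes: every infinite execution satisfies Termination,
Agreement, and decided values are admissible for the corresponding input
configuration. -/
def SolvesVal {n : ℕ} {Vi Vo : Type} (t : ℕ) (A : Algorithm n Vi Vo)
    (val : (Fin n → Option Vi) → Set Vo) : Prop :=
  ∀ E : Exec A, IsExec t A ⊤ E →
    -- Termination
    (∀ i, i ∉ E.faulty → ∃ v, Decides ⊤ E i v) ∧
    -- Agreement
    (∀ i i' v v', i ∉ E.faulty → i' ∉ E.faulty →
      Decides ⊤ E i v → Decides ⊤ E i' v' → v = v') ∧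
    -- Validity
    (∀ c, CorrespondsTo E c → ∀ i, i ∉ E.faulty → ∀ v, Decides ⊤ E i v → v ∈ val c)

section Aux

variable {n : ℕ} {Vi Vo : Type} (A : Algorithm n Vi Vo)

/-- One fault-free synchronous step: from (state, sent-set) data at some round
produce the data at the next round, delivering every message. -/
noncomputable def extStep (f : Fin n → A.St × Set (Message n)) :
    Fin n → A.St × Set (Message n) :=
  fun i => A.trans (f i).1 {m | m.receiver = i ∧ m ∈ (f m.sender).2}

/-- Data of rounds `K+1+m` obtained by running `A` fault-free after the
`K`-round execution `E`. -/
noncomputable def extData (E : Exec A) (K : ℕ) : ℕ → Fin n → A.St × Set (Message n)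
  | 0 => fun i => A.trans (E.st i K) (E.recvd i K)
  | (m + 1) => extStep A (extData E K m)

/-- The infinite execution extending the `K`-round execution `E` fault-free. -/
noncomputable def extExec (E : Exec A) (K : ℕ) : Exec A where
  faulty := E.faulty
  st := fun i j => if j ≤ K then E.st i j else (extData A E K (j - K - 1) i).1
  sent := fun i j => if j ≤ K then E.sent i j else (extData A E K (j - K - 1) i).2
  sendOmit := fun i j => if j ≤ K then E.sendOmit i j else ∅
  recvd := fun i j => if j ≤ K then E.recvd i j else
    {m | m.receiver = i ∧ m ∈ (extData A E K (j - K - 1) m.sender).2}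
  recvOmit := fun i j => if j ≤ K then E.recvOmit i j else ∅

lemma extData_inv {t K : ℕ} {E : Exec A}
    (hE : IsExec t A (K : ℕ∞) E) (hK : 1 ≤ K) :
    ∀ m, ∀ i, A.proc ((extData A E K m i).1) = i ∧
      A.rnd ((extData A E K m i).1) = K + 1 + m ∧
      (∀ msg ∈ (extData A E K m i).2, msg.sender = i ∧ msg.round = K + 1 + m) ∧
      (∀ msg ∈ (extData A E K m i).2, ∀ msg' ∈ (extData A E K m i).2,
        msg.receiver = msg'.receiver → msg = msg') := by
  obtain ⟨-, -, -, hwf, -, -, -⟩ := hE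
  intro m
  induction m with
  | zero =>
    intro i
    obtain ⟨hp, hr, -, hrm, -, -, -, hru⟩ := hwf i K ⟨hK, by exact_mod_cast le_refl K⟩
    have hvr : ValidRecv A.proc A.rnd (E.st i K) (E.recvd i K) := by
      refine ⟨fun m hm => ?_, fun m hm m' hm' hs => ?_⟩
      · obtain ⟨h1, h2⟩ := hrm m (Or.inl hm); rw [hp, hr]; exact ⟨h1, h2⟩
      · exact hru m (Or.inl hm) m' (Or.inl hm') hs
    obtain ⟨h1, h2, -, -, h5, h6⟩ := A.trans_ok _ _ hvr
    simp only [extData]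
    refine ⟨by rw [h1, hp], by rw [h2, hr], fun msg hmsg => ?_, h6⟩
    obtain ⟨hs, hrd⟩ := h5 msg hmsg
    exact ⟨by rw [hs, hp], by rw [hrd, hr]⟩
  | succ m ih =>
    intro i
    obtain ⟨hp, hr, hsm, hsu⟩ := ih i
    have hvr : ValidRecv A.proc A.rnd ((extData A E K m i).1)
        {msg | msg.receiver = i ∧ msg ∈ (extData A E K m msg.sender).2} := by
      refine ⟨fun msg hmsg => ?_, fun msg hmsg msg' hmsg' hs => ?_⟩
      · exact ⟨by rw [hp]; exact hmsg.1,
          by rw [hr]; exact ((ih msg.sender).2.2.1 msg hmsg.2).2⟩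
      · have h1 := hmsg.2
        have h2 := hmsg'.2
        rw [hs] at h1
        exact (ih msg'.sender).2.2.2 msg h1 msg' h2
          (hmsg.1.trans hmsg'.1.symm)
    obtain ⟨h1, h2, -, -, h5, h6⟩ := A.trans_ok _ _ hvr
    have hed : extData A E K (m + 1) i
        = A.trans ((extData A E K m i).1)
            {msg | msg.receiver = i ∧ msg ∈ (extData A E K m msg.sender).2} := by
      simp only [extData, extStep]
    rw [hed]
    refine ⟨by rw [h1, hp], by rw [h2, hr]; ring, fun msg hmsg => ?_, h6⟩
    obtain ⟨hs, hrd⟩ := h5 msg hmsg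
    exact ⟨by rw [hs, hp], by rw [hrd, hr]; ring⟩

lemma extExec_isExec {t K : ℕ} {E : Exec A}
    (hE : IsExec t A (K : ℕ∞) E) (hK : 1 ≤ K) :
    IsExec t A ⊤ (extExec A E K) := by
  have hinv := extData_inv A hE hK
  obtain ⟨hcard, hinit, htrans, hwf, hsv, hrv, hom⟩ := hE
  refine ⟨hcard, ?_, ?_, ?_, ?_, ?_, ?_⟩
  · intro _ i
    obtain ⟨v, h1, h2⟩ := hinit (by exact_mod_cast hK) i
    refine ⟨v, ?_, ?_⟩
    · simp only [extExec, if_pos hK]; exact h1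
    · simp only [extExec, if_pos hK]; exact h2
  · intro i j hj _
    rcases lt_trichotomy j K with h | h | h
    · have h1 : j ≤ K := le_of_lt h
      have h2 : j + 1 ≤ K := h
      simp only [extExec, if_pos h1, if_pos h2]
      exact htrans i j hj (by exact_mod_cast h)
    · subst h
      have h2 : ¬ (j + 1 ≤ j) := by omega
      have h3 : j + 1 - j - 1 = 0 := by omega
      simp only [extExec, if_pos (le_refl j), if_neg h2, h3, Set.union_empty]
      rfl
    · have h1 : ¬ (j ≤ K) := by omega
      have h2 : ¬ (j + 1 ≤ K) := by omega
      have h3 : j + 1 - K - 1 = (j - K - 1) + 1 := by omega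
      simp only [extExec, if_neg h1, if_neg h2, h3, Set.union_empty]
      rfl
  · intro i j hj
    by_cases h : j ≤ K
    · have := hwf i j ⟨hj.1, by exact_mod_cast h⟩
      simpa only [extExec, if_pos h] using this
    · have hKj : K + 1 + (j - K - 1) = j := by omega
      obtain ⟨hp, hr, hsm, hsu⟩ := hinv (j - K - 1) i
      simp only [extExec, if_neg h, Set.union_empty, Set.inter_empty]
      refine ⟨hp, by rw [hr, hKj], ?_, ?_, by trivial, by trivial, hsu, ?_⟩
      · intro m hm
        obtain ⟨h1, h2⟩ := hsm m hm
        exact ⟨h1, by rw [h2, hKj]⟩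
      · intro m hm
        exact ⟨hm.1, by
          have := (hinv (j - K - 1) m.sender).2.2.1 m hm.2
          rw [this.2, hKj]⟩
      · intro m hm m' hm' hs
        have h1 := hm.2
        rw [hs] at h1
        exact (hinv (j - K - 1) m'.sender).2.2.2 m h1 m' hm'.2
          (hm.1.trans hm'.1.symm)
  · intro i j hj m hm
    by_cases h : j ≤ K
    · simp only [extExec, if_pos h] at hm ⊢
      exact hsv i j ⟨hj.1, by exact_mod_cast h⟩ m hm
    · simp only [extExec, if_neg h, Set.union_empty] at hm ⊢
      have hsender := (hinv (j - K - 1) i).2.2.1 m hm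
      exact ⟨rfl, by rw [hsender.1]; exact hm⟩
  · intro i j hj m hm
    by_cases h : j ≤ K
    · simp only [extExec, if_pos h] at hm ⊢
      exact hrv i j ⟨hj.1, by exact_mod_cast h⟩ m hm
    · simp only [extExec, if_neg h, Set.union_empty] at hm ⊢
      exact hm.2
  · intro i ⟨j, hj, hne⟩
    simp only [extExec]
    by_cases h : j ≤ K
    · simp only [extExec, if_pos h] at hne
      exact hom i ⟨j, ⟨hj.1, by exact_mod_cast h⟩, hne⟩
    · simp only [extExec, if_neg h] at hne
      rcases hne with h' | h' <;> exact absurd rfl h'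

/-- The key lemma for infinite executions. -/
lemma key {t : ℕ} (htn : t < n)
    (val : (Fin n → Option Vi) → Set Vo)
    (hA : SolvesVal t A val)
    (E : Exec A) (hE : IsExec t A ⊤ E)
    (c : Fin n → Option Vi) (hcorr : CorrespondsTo E c)
    (i : Fin n) (hi : i ∉ E.faulty)
    (v' : Vo) (hdec : Decides ⊤ E i v')
    (c' : Fin n → Option Vi) (hc' : IsInputConf n t c') (hcc' : Contains c c') :
    v' ∈ val c' := by
  classical
  set F' : Set (Fin n) := {i | c' i = none} with hF'
  have hsub : E.faulty ⊆ F' := by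
    intro p hp
    by_contra hnp
    have h1 : c' p ≠ none := hnp
    have h2 := hcc' p h1
    rw [(hcorr p).2 hp] at h2
    exact h1 h2.symm
  set E₂ : Exec A := { E with faulty := F' } with hE₂def
  have hcompl : F' = {i | c' i ≠ none}ᶜ := by
    ext p; simp [hF']
  have hcard : F'.encard ≤ (t : ℕ∞) := by
    rw [Set.encard_le_coe_iff_finite_ncard_le]
    refine ⟨Set.toFinite _, ?_⟩
    have hsum := Set.ncard_add_ncard_compl {i | c' i ≠ none}
      (Set.toFinite _) (Set.toFinite _)
    have hcn : Nat.card (Fin n) = n := by simp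
    rw [hcn] at hsum
    rw [hcompl]
    have := hc'
    unfold IsInputConf at this
    omega
  have hE₂ : IsExec t A ⊤ E₂ := by
    obtain ⟨-, h2, h3, h4, h5, h6, h7⟩ := hE
    exact ⟨hcard, h2, h3, h4, h5, h6, fun p hp => hsub (h7 p hp)⟩
  have hcorr₂ : CorrespondsTo E₂ c' := by
    intro p
    constructor
    · intro hp
      have h1 : c' p ≠ none := hp
      rw [← hcc' p h1]
      exact (hcorr p).1 (fun hmem => hp (hsub hmem))
    · intro hp; exact hp
  -- a correct process in E₂
  have hne : {i | c' i ≠ none}.Nonempty := by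
    rw [← Set.ncard_pos (Set.toFinite _)]
    have := hc'
    unfold IsInputConf at this
    omega
  obtain ⟨p, hp⟩ := hne
  have hpE : p ∉ E.faulty := fun hmem => hp (hsub hmem)
  obtain ⟨hterm, hagree, hvalid⟩ := hA E hE
  obtain ⟨w, hw⟩ := hterm p hpE
  have hwv : w = v' := hagree p i w v' hpE hi hw hdec
  subst hwv
  have hp₂ : p ∉ E₂.faulty := hp
  have hdec₂ : Decides ⊤ E₂ p w := hw
  exact (hA E₂ hE₂).2.2 c' hcorr₂ p hp₂ w hdec₂

end Aux

/-- If `A` solves the `val`-agreement problem, `E` is a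
(finite or infinite) execution of `A` corresponding to the input configuration
`c`, and some correct process decides `v'` in `E`, then `v'` is admissible for
every input configuration contained in `c`. -/
theorem decided_value_in_containment_set
    (n t : ℕ) (htn : t < n)
    (Vi Vo : Type) [Nonempty Vi]
    (val : (Fin n → Option Vi) → Set Vo)
    (hval : ∀ c : Fin n → Option Vi, IsInputConf n t c → (val c).Nonempty)
    (A : Algorithm n Vi Vo) (hA : SolvesVal t A val)
    (k : ℕ∞) (E : Exec A) (hE : IsExec t A k E)
    (c : Fin n → Option Vi) (hc : IsInputConf n t c) (hcorr : CorrespondsTo E c)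
    (i : Fin n) (hi : i ∉ E.faulty)
    (v' : Vo) (hdec : Decides k E i v') :
    ∀ c' : Fin n → Option Vi, IsInputConf n t c' → Contains c c' → v' ∈ val c' := by
  intro c' hc' hcc'
  rcases eq_or_ne k ⊤ with hk | hk
  · subst hk
    exact key A htn val hA E hE c hcorr i hi v' hdec c' hc' hcc'
  · lift k to ℕ using hk with K
    obtain ⟨j, ⟨hj1, hjK⟩, hdj⟩ := hdec
    have hjK' : j ≤ K := by exact_mod_cast hjK
    have hK : 1 ≤ K := le_trans hj1 hjK'
    have hE₁ := extExec_isExec A hE hK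
    have hst : ∀ i j, j ≤ K → (extExec A E K).st i j = E.st i j := by
      intro i j hj
      simp only [extExec, if_pos hj]
    have hcorr₁ : CorrespondsTo (extExec A E K) c := by
      intro p
      rw [hst p 1 hK]
      exact hcorr p
    have hi₁ : i ∉ (extExec A E K).faulty := hi
    have hdec₁ : Decides ⊤ (extExec A E K) i v' := by
      refine ⟨j, ⟨hj1, le_top⟩, ?_⟩
      rw [hst i j hjK']
      exact hdj
    exact key A htn val hA (extExec A E K) hE₁ c hcorr₁ i hi₁ v' hdec₁ c' hc' hcc'
end

section
/- Let 𝒜 be a deterministic algorithm that solves the val-agreement problem in the omission model for a validity property val. Let c₀ ∈ I_n, let E₀ be the unique infinite execution of 𝒜 with no faulty processes and input_conf(E₀) = c₀, and let v₀' be the value decided by the processes in E₀. Let c₁* ∈ I be an input configuration with v₀' ∉ val(c₁*), let c₁ ∈ I_n satisfy c₁ ⊒ c₁*, let E₁ be the unique infinite execution of 𝒜 with no faulty processes and input_conf(E₁) = c₁, and let v₁' be the value decided by the processes in E₁ (such decided values exist by Termination and Agreement). Then v₁' ≠ v₀'. -/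
namespace Exec

variable {n : ℕ} {Vi Vo : Type} {A : Algorithm n Vi Vo}

def withFaulty (E : Exec A) (F : Set (Fin n)) : Exec A := { E with faulty := F }

theorem isExec_withFaulty {t : ℕ} {k : ℕ∞} {E : Exec A} (hE : IsExec t A k E)
    {F : Set (Fin n)} (hsub : E.faulty ⊆ F) (hF : F.encard ≤ t) :
    IsExec t A k (E.withFaulty F) := by
  obtain ⟨-, hinit, htrans, hwf, hsend, hrecv, homit⟩ := hE
  exact ⟨hF, hinit, htrans, hwf, hsend, hrecv, fun i hi => hsub (homit i hi)⟩

theorem decides_withFaulty {k : ℕ∞} {E : Exec A} {F : Set (Fin n)} {i : Fin n} {v : Vo} :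
    Decides k (E.withFaulty F) i v ↔ Decides k E i v :=
  Iff.rfl

theorem correspondsTo_withFaulty {E : Exec A} {c c' : Fin n → Option Vi}
    (hcor : CorrespondsTo E c) (hcont : Contains c c')
    (hsub : E.faulty ⊆ {i | c' i = none}) :
    CorrespondsTo (E.withFaulty {i | c' i = none}) c' := by
  intro i
  refine ⟨fun hi => ?_, id⟩
  have hcorrect : i ∉ E.faulty := fun h => hi (hsub h)
  exact (hcont i hi).symm.trans ((hcor i).1 hcorrect)

end Exec

theorem ncard_compl_le_of_isInputConf {n t : ℕ} {Vi : Type} {c : Fin n → Option Vi}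
    (hc : IsInputConf n t c) : {i | c i = none}.ncard ≤ t := by
  have hsum := Set.ncard_add_ncard_compl {i | c i ≠ none}
  simp only [Set.compl_ofPred, not_not, Nat.card_eq_fintype_card, Fintype.card_fin] at hsum
  unfold IsInputConf at hc
  omega

theorem encard_compl_le_of_isInputConf {n t : ℕ} {Vi : Type} {c : Fin n → Option Vi}
    (hc : IsInputConf n t c) : {i | c i = none}.encard ≤ t := by
  rw [← (Set.toFinite _).cast_ncard_eq]
  exact_mod_cast ncard_compl_le_of_isInputConf hc

theorem exists_ne_none_of_isInputConf {n t : ℕ} (htn : t < n) {Vi : Type}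
    {c : Fin n → Option Vi} (hc : IsInputConf n t c) : ∃ i, c i ≠ none :=
  Set.nonempty_of_ncard_ne_zero (Nat.pos_iff_ne_zero.1 ((Nat.sub_pos_of_lt htn).trans_le hc))

theorem SolvesVal.decides_mem_val_of_contains {n t : ℕ} (htn : t < n) {Vi Vo : Type}
    {val : (Fin n → Option Vi) → Set Vo} {A : Algorithm n Vi Vo} (hA : SolvesVal t A val)
    {E : Exec A} (hE : IsExec t A ⊤ E) {c c' : Fin n → Option Vi} (hcor : CorrespondsTo E c)
    (hc' : IsInputConf n t c') (hcont : Contains c c') (hsub : E.faulty ⊆ {i | c' i = none})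
    {i : Fin n} (hi : i ∉ E.faulty) {v : Vo} (hv : Decides ⊤ E i v) : v ∈ val c' := by
  set E' := E.withFaulty {j | c' j = none}
  have hE' : IsExec t A ⊤ E' :=
    Exec.isExec_withFaulty hE hsub (encard_compl_le_of_isInputConf hc')
  obtain ⟨j, hj⟩ := exists_ne_none_of_isInputConf htn hc'
  obtain ⟨w, hw⟩ := (hA E' hE').1 j hj
  have hwv : w = v :=
    (hA E hE).2.1 j i w v (fun h => hj (hsub h)) hi (Exec.decides_withFaulty.1 hw) hv
  exact hwv ▸ (hA E' hE').2.2 c' (Exec.correspondsTo_withFaulty hcor hcont hsub) j hj w hw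

theorem reduction_decisions_differ_general
    (n t : ℕ) (htn : t < n)
    (Vi Vo : Type)
    (val : (Fin n → Option Vi) → Set Vo)
    (A : Algorithm n Vi Vo) (hA : SolvesVal t A val)
    (v₀ : Vo)
    (c₁s : Fin n → Option Vi) (hc₁s : IsInputConf n t c₁s) (hv₀ : v₀ ∉ val c₁s)
    (c₁ : Fin n → Option Vi) (hcont : Contains c₁ c₁s)
    (E₁ : Exec A) (hE₁ : IsExec t A ⊤ E₁) (hf₁ : E₁.faulty = ∅)
    (hcor₁ : CorrespondsTo E₁ c₁)
    (v₁ : Vo) (hd₁ : ∃ i, Decides ⊤ E₁ i v₁) :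
    v₁ ≠ v₀ := by
  rintro rfl
  obtain ⟨i, hi⟩ := hd₁
  exact hv₀ (hA.decides_mem_val_of_contains htn hE₁ hcor₁ hc₁s hcont (by simp [hf₁])
    (by simp [hf₁]) hi)

/-- Let `A` solve the `val`-agreement problem, `E₀` a fully
correct infinite execution corresponding to `c₀ ∈ I_n` deciding `v₀`, `c₁*` an
input configuration with `v₀ ∉ val c₁*`, `c₁ ∈ I_n` with `c₁ ⊒ c₁*`, and `E₁`
the fully correct infinite execution corresponding to `c₁`, deciding `v₁`.
Then `v₁ ≠ v₀`. -/
theorem reduction_decisions_differ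
    (n t : ℕ) (htn : t < n)
    (Vi Vo : Type) [Nonempty Vi]
    (val : (Fin n → Option Vi) → Set Vo)
    (hval : ∀ c : Fin n → Option Vi, IsInputConf n t c → (val c).Nonempty)
    (A : Algorithm n Vi Vo) (hA : SolvesVal t A val)
    (c₀ : Fin n → Option Vi) (hc₀full : ∀ i, c₀ i ≠ none)
    (E₀ : Exec A) (hE₀ : IsExec t A ⊤ E₀) (hf₀ : E₀.faulty = ∅)
    (hcor₀ : CorrespondsTo E₀ c₀)
    (v₀ : Vo) (hd₀ : ∃ i, Decides ⊤ E₀ i v₀)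
    (c₁s : Fin n → Option Vi) (hc₁s : IsInputConf n t c₁s) (hv₀ : v₀ ∉ val c₁s)
    (c₁ : Fin n → Option Vi) (hc₁full : ∀ i, c₁ i ≠ none) (hcont : Contains c₁ c₁s)
    (E₁ : Exec A) (hE₁ : IsExec t A ⊤ E₁) (hf₁ : E₁.faulty = ∅)
    (hcor₁ : CorrespondsTo E₁ c₁)
    (v₁ : Vo) (hd₁ : ∃ i, Decides ⊤ E₁ i v₁) :
    v₁ ≠ v₀ :=
  reduction_decisions_differ_general n t htn Vi Vo val A hA v₀ c₁s hc₁s hv₀ c₁ hcont E₁ hE₁ hf₁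
    hcor₁ v₁ hd₁
end

section
/- Let n, t ∈ ℕ with t < n, let V_I be a nonempty proposal set and V_O a decision set, and let val be a validity property such that the val-agreement problem is non-trivial (⋂_{c ∈ I} val(c) = ∅). If there exists a deterministic algorithm solving the val-agreement problem in the omission model, then there exists a function Γ : I → V_O such that Γ(c) ∈ ⋂_{c' ∈ Cnt(c)} val(c') for every c ∈ I; in particular, ⋂_{c' ∈ Cnt(c)} val(c') ≠ ∅ for every c ∈ I. (This is the containment condition; we state the existence of Γ, omitting the paper's additional assertion that Γ is Turing-computable.) -/
/-- Auxiliary: the synchronous, omission-free run of `A` with proposals `f`: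
`SS A f k i` is the state of process `i` at round `k+1` together with the
messages it sends in round `k+1`. -/
noncomputable def SS {n : ℕ} {Vi Vo : Type} (A : Algorithm n Vi Vo)
    (f : Fin n → Vi) : ℕ → Fin n → A.St × Set (Message n)
  | 0 => fun i => (A.init i (f i), A.initMsgs i (f i))
  | k+1 => fun i =>
      A.trans (SS A f k i).1 {m | m.receiver = i ∧ m ∈ (SS A f k m.sender).2}

lemma SS_inv {n : ℕ} {Vi Vo : Type} (A : Algorithm n Vi Vo)
    (f : Fin n → Vi) : ∀ k, ∀ i : Fin n,
    A.proc (SS A f k i).1 = i ∧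
    A.rnd (SS A f k i).1 = k + 1 ∧
    A.prop (SS A f k i).1 = f i ∧
    (∀ m ∈ (SS A f k i).2, m.sender = i ∧ m.round = k + 1) ∧
    (∀ m ∈ (SS A f k i).2, ∀ m' ∈ (SS A f k i).2,
      m.receiver = m'.receiver → m = m') := by
  intro k
  induction k with
  | zero =>
    intro i
    refine ⟨A.init_proc i (f i), A.init_rnd i (f i), A.init_prop i (f i), ?_, ?_⟩
    · exact fun m hm => ⟨A.initMsgs_sender i (f i) m hm, A.initMsgs_round i (f i) m hm⟩
    · exact A.initMsgs_uniq i (f i)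
  | succ k ih =>
    intro i
    have hvr : ValidRecv A.proc A.rnd (SS A f k i).1
        {m | m.receiver = i ∧ m ∈ (SS A f k m.sender).2} := by
      constructor
      · rintro m ⟨hm1, hm2⟩
        exact ⟨by rw [hm1, (ih i).1], by rw [((ih m.sender).2.2.2.1 m hm2).2, (ih i).2.1]⟩
      · rintro m ⟨hm1, hm2⟩ m' ⟨hm'1, hm'2⟩ hs
        have hms := ((ih m.sender).2.2.2.1 m hm2).1
        have hm'2' : m' ∈ (SS A f k m.sender).2 := by rw [hs]; exact hm'2
        exact (ih m.sender).2.2.2.2 m hm2 m' hm'2' (by rw [hm1, hm'1])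
    have := A.trans_ok (SS A f k i).1
      {m | m.receiver = i ∧ m ∈ (SS A f k m.sender).2} hvr
    refine ⟨?_, ?_, ?_, ?_, ?_⟩
    · show A.proc (A.trans _ _).1 = i
      rw [this.1, (ih i).1]
    · show A.rnd (A.trans _ _).1 = k + 1 + 1
      rw [this.2.1, (ih i).2.1]
    · show A.prop (A.trans _ _).1 = f i
      rw [this.2.2.1, (ih i).2.2.1]
    · intro m hm
      have h := this.2.2.2.2.1 m hm
      exact ⟨by rw [h.1, (ih i).1], by rw [h.2, (ih i).2.1]⟩
    · exact this.2.2.2.2.2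

/-- Auxiliary: the omission-free execution of `A` with proposals `f` and
(behaviourally irrelevant) faulty set `F`. -/
noncomputable def Ex {n : ℕ} {Vi Vo : Type} (A : Algorithm n Vi Vo)
    (f : Fin n → Vi) (F : Set (Fin n)) : Exec A where
  faulty := F
  st := fun i j => (SS A f (j - 1) i).1
  sent := fun i j => (SS A f (j - 1) i).2
  sendOmit := fun _ _ => ∅
  recvd := fun i j => {m | m.receiver = i ∧ m ∈ (SS A f (j - 1) m.sender).2}
  recvOmit := fun _ _ => ∅

lemma Ex_isExec {n : ℕ} {Vi Vo : Type} (t : ℕ) (A : Algorithm n Vi Vo)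
    (f : Fin n → Vi) (F : Set (Fin n)) (hF : F.encard ≤ (t : ℕ∞)) :
    IsExec t A ⊤ (Ex A f F) := by
  refine ⟨hF, ?_, ?_, ?_, ?_, ?_, ?_⟩
  · intro _ i
    exact ⟨f i, rfl, by simp [Ex, SS]⟩
  · intro i j hj _
    obtain ⟨m, rfl⟩ := Nat.exists_eq_add_of_le hj
    have h1 : 1 + m - 1 = m := by omega
    have h2 : 1 + m + 1 - 1 = m + 1 := by omega
    show A.trans (SS A f (1 + m - 1) i).1
        {msg | msg.receiver = i ∧ msg ∈ (SS A f (1 + m - 1) msg.sender).2}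
      = ((SS A f (1 + m + 1 - 1) i).1, (SS A f (1 + m + 1 - 1) i).2 ∪ ∅)
    rw [h1, h2, Set.union_empty]
    rfl
  · intro i j hj
    obtain ⟨m, rfl⟩ := Nat.exists_eq_add_of_le hj.1
    have hm : 1 + m - 1 = m := by omega
    have inv := SS_inv A f m
    refine ⟨?_, ?_, ?_, ?_, by simp [Ex], by simp [Ex], ?_, ?_⟩
    · show A.proc (SS A f (1 + m - 1) i).1 = i
      rw [hm]; exact (inv i).1
    · show A.rnd (SS A f (1 + m - 1) i).1 = 1 + m
      rw [hm, (inv i).2.1]; omega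
    · intro msg hmsg
      simp only [Ex, Set.union_empty, hm] at hmsg
      have := (inv i).2.2.2.1 msg hmsg
      exact ⟨this.1, by omega⟩
    · rintro msg hmsg
      simp only [Ex, Set.union_empty, hm, Set.mem_setOf_eq] at hmsg
      have := (inv msg.sender).2.2.2.1 msg hmsg.2
      exact ⟨hmsg.1, by omega⟩
    · intro m1 hm1 m2 hm2 hrec
      simp only [Ex, Set.union_empty, hm] at hm1 hm2
      exact (inv i).2.2.2.2 m1 hm1 m2 hm2 hrec
    · intro m1 hm1 m2 hm2 hs
      simp only [Ex, Set.union_empty, hm, Set.mem_setOf_eq] at hm1 hm2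
      have hm2' : m2 ∈ (SS A f m m1.sender).2 := by rw [hs]; exact hm2.2
      exact (inv m1.sender).2.2.2.2 m1 hm1.2 m2 hm2' (by rw [hm1.1, hm2.1])
  · intro i j hj msg hmsg
    obtain ⟨m, rfl⟩ := Nat.exists_eq_add_of_le hj.1
    have hm : 1 + m - 1 = m := by omega
    simp only [Ex, hm] at hmsg ⊢
    left
    have := ((SS_inv A f m i).2.2.2.1 msg hmsg).1
    exact ⟨rfl, by rw [this]; exact hmsg⟩
  · intro i j hj msg hmsg
    simp only [Ex, Set.union_empty, Set.mem_setOf_eq] at hmsg ⊢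
    exact hmsg.2
  · rintro i ⟨j, _, h | h⟩ <;> simp [Ex] at h

/-- If a non-trivial `val`-agreement problem is solvable by a
deterministic algorithm in the omission model, then `val` satisfies the
containment condition: there is a function `Γ` assigning to every input
configuration `c` a value admissible for every input configuration contained
in `c`; in particular `⋂_{c' ∈ Cnt(c)} val(c') ≠ ∅` for every `c ∈ I`. -/
theorem containment_condition_necessary
    (n t : ℕ) (htn : t < n)
    (Vi Vo : Type) [Nonempty Vi]
    (val : (Fin n → Option Vi) → Set Vo)
    (hval : ∀ c : Fin n → Option Vi, IsInputConf n t c → (val c).Nonempty)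
    (hnontriv : (⋂ c ∈ {c : Fin n → Option Vi | IsInputConf n t c}, val c) = ∅)
    (hex : ∃ A : Algorithm n Vi Vo, SolvesVal t A val) :
    (∃ Γ : (Fin n → Option Vi) → Vo, ∀ c, IsInputConf n t c →
      ∀ c', IsInputConf n t c' → Contains c c' → Γ c ∈ val c') ∧
    (∀ c : Fin n → Option Vi, IsInputConf n t c →
      (⋂ c' ∈ {c' : Fin n → Option Vi | IsInputConf n t c' ∧ Contains c c'}, val c') ≠ ∅) := by
  obtain ⟨A, hA⟩ := hex
  obtain ⟨v₀⟩ := ‹Nonempty Vi›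
  -- cardinality facts
  have hcard : ∀ c : Fin n → Option Vi, IsInputConf n t c →
      ({i : Fin n | c i = none} : Set (Fin n)).encard ≤ (t : ℕ∞) := by
    intro c hc
    have hc' : n - t ≤ ({i : Fin n | c i ≠ none} : Set (Fin n)).ncard := hc
    have h1 := Set.ncard_add_ncard_compl ({i : Fin n | c i ≠ none} : Set (Fin n))
    have h2 : Nat.card (Fin n) = n := by simp
    have hle : ({i : Fin n | c i = none} : Set (Fin n)).ncard ≤ t := by
      have hset : ({i : Fin n | c i = none} : Set (Fin n))
          = ({i : Fin n | c i ≠ none} : Set (Fin n))ᶜ := by ext i; simp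
      rw [hset]; omega
    have hfin : ({i : Fin n | c i = none} : Set (Fin n)).Finite := Set.toFinite _
    rw [Set.ncard_eq_toFinset_card _ hfin] at hle
    rw [hfin.encard_eq_coe_toFinset_card]
    exact_mod_cast hle
  have hne : ∀ c : Fin n → Option Vi, IsInputConf n t c →
      ∃ i, c i ≠ none := by
    intro c hc
    have hc' : n - t ≤ ({i : Fin n | c i ≠ none} : Set (Fin n)).ncard := hc
    have : 0 < ({i : Fin n | c i ≠ none} : Set (Fin n)).ncard := by omega
    obtain ⟨i, hi⟩ := Set.nonempty_of_ncard_ne_zero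
      (s := ({i : Fin n | c i ≠ none} : Set (Fin n))) (by omega)
    exact ⟨i, hi⟩
  -- the key claim
  have key : ∀ c, IsInputConf n t c →
      ∃ v, ∀ c', IsInputConf n t c' → Contains c c' → v ∈ val c' := by
    intro c hc
    set f : Fin n → Vi := fun i => (c i).getD v₀ with hf
    set E : Exec A := Ex A f {i | c i = none} with hE
    have hEex : IsExec t A ⊤ E := Ex_isExec t A f _ (hcard c hc)
    obtain ⟨i₀, hi₀⟩ := hne c hc
    have hi₀' : i₀ ∉ E.faulty := hi₀
    obtain ⟨v, hv⟩ := (hA E hEex).1 i₀ hi₀'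
    refine ⟨v, ?_⟩
    intro c' hc' hcc'
    set E' : Exec A := Ex A f {i | c' i = none} with hE'
    have hE'ex : IsExec t A ⊤ E' := Ex_isExec t A f _ (hcard c' hc')
    obtain ⟨i₁, hi₁⟩ := hne c' hc'
    have hi₁' : i₁ ∉ E'.faulty := hi₁
    obtain ⟨w, hw⟩ := (hA E' hE'ex).1 i₁ hi₁'
    -- E' corresponds to c'
    have hcorr : CorrespondsTo E' c' := by
      intro i
      constructor
      · intro hi
        have hi2 : c' i ≠ none := hi
        have hci : c i = c' i := hcc' i hi2
        obtain ⟨x, hx⟩ := Option.ne_none_iff_exists'.1 hi2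
        have hprop : A.prop (E'.st i 1) = f i := by
          show A.prop (SS A f (1 - 1) i).1 = f i
          exact (SS_inv A f 0 i).2.2.1
        rw [hprop]
        simp only [hf, hci, hx, Option.getD_some]
      · intro hi
        exact hi
    have hwval : w ∈ val c' := (hA E' hE'ex).2.2 c' hcorr i₁ hi₁' w hw
    -- Decides is insensitive to the faulty set
    have hdec : Decides ⊤ E i₁ w := hw
    -- i₁ is also correct in E
    have hi₁E : i₁ ∉ E.faulty := by
      show ¬ (c i₁ = none)
      rw [hcc' i₁ hi₁]; exact hi₁
    have := (hA E hEex).2.1 i₀ i₁ v w hi₀' hi₁E hv hdec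
    rwa [this]
  -- Vo is nonempty
  have hVo : Nonempty Vo := by
    have hconf : IsInputConf n t (fun _ : Fin n => some v₀) := by
      unfold IsInputConf
      have : ({i : Fin n | (some v₀ : Option Vi) ≠ none} : Set (Fin n)) = Set.univ := by
        ext i; simp
      rw [this, Set.ncard_univ]
      simp only [Nat.card_eq_fintype_card, Fintype.card_fin]
      omega
    exact ⟨(hval _ hconf).some⟩
  obtain ⟨w₀⟩ := hVo
  classical
  refine ⟨⟨fun c => if h : ∃ v, ∀ c', IsInputConf n t c' → Contains c c' → v ∈ val c'
      then h.choose else w₀, ?_⟩, ?_⟩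
  · intro c hc c' hc' hcc'
    have h := key c hc
    simp only [dif_pos h]
    exact h.choose_spec c' hc' hcc'
  · intro c hc
    obtain ⟨v, hv⟩ := key c hc
    rw [← Set.nonempty_iff_ne_empty]
    exact ⟨v, by simp only [Set.mem_iInter, Set.mem_setOf_eq]; exact fun c' h => hv c' h.1 h.2⟩
end

section
/- Let n, t ∈ ℕ with t < n, let V_I be a nonempty proposal set and V_O a decision set, and let val be a validity property satisfying the containment condition, witnessed by a function Γ : I → V_O with Γ(c) ∈ ⋂_{c' ∈ Cnt(c)} val(c') for every c ∈ I. Suppose there exists a deterministic algorithm solving the interactive-consistency agreement problem in the omission model, i.e., the val_IC-agreement problem with proposal set V_I, decision set I_n, and val_IC(c) = {c' ∈ I_n : c' ⊒ c} for every c ∈ I. Then there exists a deterministic algorithm solving the val-agreement problem in the omission model (for the same n and t). -/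
/-! Run the interactive-consistency algorithm and, when it decides a vector `vec`, decide
`Γ (some ∘ vec)` instead. Termination and agreement are inherited. The decided vector contains the
input configuration `c` of the execution, and a full vector is itself an input configuration, so the
containment condition gives `Γ (some ∘ vec) ∈ val c`. -/

namespace Algorithm

variable {n : ℕ} {Vi Vo Vo' : Type}

def mapDec (A : Algorithm n Vi Vo) (f : Vo → Vo') : Algorithm n Vi Vo' where
  St := A.St
  proc := A.proc
  rnd := A.rnd
  prop := A.prop
  dec s := (A.dec s).map f
  init := A.init
  initMsgs := A.initMsgs
  trans := A.trans
  init_proc := A.init_proc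
  init_rnd := A.init_rnd
  init_prop := A.init_prop
  init_dec i v := by simp only [A.init_dec, Option.map_none]
  initMsgs_sender := A.initMsgs_sender
  initMsgs_round := A.initMsgs_round
  initMsgs_uniq := A.initMsgs_uniq
  trans_ok s M hM := by
    obtain ⟨hproc, hrnd, hprop, hdec, hsent, huniq⟩ := A.trans_ok s M hM
    refine ⟨hproc, hrnd, hprop, fun hne => ?_, hsent, huniq⟩
    rw [hdec fun h => hne (by rw [h, Option.map_none])]

end Algorithm

namespace Exec

variable {n : ℕ} {Vi Vo Vo' : Type} {A : Algorithm n Vi Vo} {f : Vo → Vo'}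

def ofMapDec (E : Exec (A.mapDec f)) : Exec A :=
  ⟨E.faulty, E.st, E.sent, E.sendOmit, E.recvd, E.recvOmit⟩

variable {E : Exec (A.mapDec f)}

theorem isExec_ofMapDec {t : ℕ} {k : ℕ∞} (hE : IsExec t (A.mapDec f) k E) :
    IsExec t A k E.ofMapDec :=
  hE

theorem decides_mapDec_iff {k : ℕ∞} {i : Fin n} {v : Vo'} :
    Decides k E i v ↔ ∃ w, Decides k E.ofMapDec i w ∧ f w = v := by
  simp only [Decides, Algorithm.mapDec, Option.map_eq_some_iff]
  exact ⟨fun ⟨j, hj, w, hw, hfw⟩ => ⟨w, ⟨j, hj, hw⟩, hfw⟩,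
    fun ⟨w, ⟨j, hj, hw⟩, hfw⟩ => ⟨j, hj, w, hw, hfw⟩⟩

theorem correspondsTo_ofMapDec {c : Fin n → Option Vi} (hc : CorrespondsTo E c) :
    CorrespondsTo E.ofMapDec c :=
  hc

end Exec

theorem IsExec.isInputConf_of_correspondsTo {n t : ℕ} {Vi Vo : Type} {A : Algorithm n Vi Vo}
    {k : ℕ∞} {E : Exec A} {c : Fin n → Option Vi} (hE : IsExec t A k E)
    (hc : CorrespondsTo E c) : IsInputConf n t c := by
  have hdom : {i | c i ≠ none} = E.faultyᶜ := by
    ext i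
    by_cases hi : i ∈ E.faulty <;> simp [hi, (hc i).1, (hc i).2]
  have hfaulty : E.faulty.ncard ≤ t := by
    exact_mod_cast (Set.ncard_le_encard E.faulty).trans hE.1
  rw [IsInputConf, hdom, Set.ncard_compl, Nat.card_eq_fintype_card, Fintype.card_fin]
  omega

theorem isInputConf_some (n t : ℕ) {Vi : Type} (vec : Fin n → Vi) :
    IsInputConf n t (fun i => some (vec i)) := by
  have hdom : {i : Fin n | some (vec i) ≠ none} = Set.univ := by
    ext i
    simp
  rw [IsInputConf, hdom, Set.ncard_univ, Nat.card_eq_fintype_card, Fintype.card_fin]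
  omega

theorem SolvesVal.mapDec {n t : ℕ} {Vi Vo Vo' : Type} {A : Algorithm n Vi Vo}
    {val : (Fin n → Option Vi) → Set Vo} {val' : (Fin n → Option Vi) → Set Vo'} {f : Vo → Vo'}
    (hA : SolvesVal t A val) (hf : ∀ c, IsInputConf n t c → ∀ w ∈ val c, f w ∈ val' c) :
    SolvesVal t (A.mapDec f) val' := by
  intro E hE
  obtain ⟨termination, agreement, validity⟩ := hA E.ofMapDec (Exec.isExec_ofMapDec hE)
  refine ⟨fun i hi => ?_, fun i i' v v' hi hi' hv hv' => ?_, fun c hc i hi v hv => ?_⟩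
  · obtain ⟨w, hw⟩ := termination i hi
    exact ⟨f w, Exec.decides_mapDec_iff.2 ⟨w, hw, rfl⟩⟩
  · obtain ⟨w, hw, rfl⟩ := Exec.decides_mapDec_iff.1 hv
    obtain ⟨w', hw', rfl⟩ := Exec.decides_mapDec_iff.1 hv'
    rw [agreement i i' w w' hi hi' hw hw']
  · obtain ⟨w, hw, rfl⟩ := Exec.decides_mapDec_iff.1 hv
    exact hf c (hE.isInputConf_of_correspondsTo hc) w
      (validity c (Exec.correspondsTo_ofMapDec hc) i hi w hw)

theorem containment_condition_sufficient_general
    (n t : ℕ)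
    (Vi Vo : Type)
    (val : (Fin n → Option Vi) → Set Vo)
    (Γ : (Fin n → Option Vi) → Vo)
    (hΓ : ∀ c, IsInputConf n t c →
      ∀ c', IsInputConf n t c' → Contains c c' → Γ c ∈ val c')
    (hIC : ∃ AIC : Algorithm n Vi (Fin n → Vi),
      SolvesVal t AIC
        (fun c => {vec : Fin n → Vi | Contains (fun i => some (vec i)) c})) :
    ∃ A : Algorithm n Vi Vo, SolvesVal t A val := by
  obtain ⟨AIC, hAIC⟩ := hIC
  exact ⟨AIC.mapDec fun vec => Γ (fun i => some (vec i)),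
    hAIC.mapDec fun c hc vec hvec => hΓ _ (isInputConf_some n t vec) c hc hvec⟩

/-- If `val` satisfies the containment condition (witnessed
by `Γ`) and the interactive-consistency agreement problem (proposal set `Vi`,
decision set `I_n ≃ (Fin n → Vi)`, with validity
`val_IC(c) = {c' ∈ I_n : c' ⊒ c}`) is solvable in the omission model, then the
`val`-agreement problem is solvable in the omission model (same `n`, `t`). -/
theorem containment_condition_sufficient
    (n t : ℕ) (htn : t < n)
    (Vi Vo : Type) [Nonempty Vi]
    (val : (Fin n → Option Vi) → Set Vo)
    (hval : ∀ c : Fin n → Option Vi, IsInputConf n t c → (val c).Nonempty)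
    (Γ : (Fin n → Option Vi) → Vo)
    (hΓ : ∀ c, IsInputConf n t c →
      ∀ c', IsInputConf n t c' → Contains c c' → Γ c ∈ val c')
    (hIC : ∃ AIC : Algorithm n Vi (Fin n → Vi),
      SolvesVal t AIC
        (fun c => {vec : Fin n → Vi | Contains (fun i => some (vec i)) c})) :
    ∃ A : Algorithm n Vi Vo, SolvesVal t A val :=
  containment_condition_sufficient_general n t Vi Vo val Γ hΓ hIC
end

section
/- Let n, t ∈ ℕ with 1 ≤ t < n ≤ 2t. Then the Strong Validity property val_strong (with V_I = V_O = {0,1}) does not satisfy the containment condition: there exists c ∈ I_n such that ⋂_{c' ∈ Cnt(c)} val_strong(c') = ∅, and consequently there is no function Γ : I → {0,1} with Γ(c) ∈ ⋂_{c' ∈ Cnt(c)} val_strong(c') for every c ∈ I. -/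
/-- Every process of `π(c)` has proposal `b` under `c`. -/
def Unanimous {n : ℕ} (c : Fin n → Option Bool) (b : Bool) : Prop :=
  ∀ i, ∀ b', c i = some b' → b' = b

/-- Strong Validity (for `V_I = V_O = {0,1}`): `val_strong(c) = {b}` if every
process of `π(c)` has proposal `b` under `c`, and `val_strong(c) = {0,1}`
otherwise. -/
def valStrong {n : ℕ} (c : Fin n → Option Bool) : Set Bool :=
  {b | Unanimous c b ∨ ∀ b₀, ¬ Unanimous c b₀}

/-!
Let `k = n - t`. In the full configuration where processes `0, …, k - 1` propose `0` and the
remaining `t` processes propose `1`, both halves are input configurations contained in it,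
since `k ≥ 1` and `t ≥ n - t`. Strong Validity forces the decision `0` on the first half and `1`
on the second, so no single decision is admissible for every configuration below it.
-/

open Finset

section Restrict

variable {n : ℕ} {α : Type}

def restrictConf (c : Fin n → Option α) (s : Finset (Fin n)) : Fin n → Option α :=
  fun i => if i ∈ s then c i else none

theorem contains_restrictConf (c : Fin n → Option α) (s : Finset (Fin n)) :
    Contains c (restrictConf c s) := by
  intro i hi
  by_cases his : i ∈ s <;> simp_all [restrictConf]

theorem isInputConf_restrictConf {c : Fin n → Option α} (hc : ∀ i, c i ≠ none)
    {t : ℕ} {s : Finset (Fin n)} (hs : n - t ≤ #s) : IsInputConf n t (restrictConf c s) := by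
  have hdom : {i | restrictConf c s i ≠ none} = ↑s := by
    ext i
    by_cases his : i ∈ s <;> simp [restrictConf, his, hc i]
  rwa [IsInputConf, hdom, Set.ncard_coe_finset]

theorem isInputConf_of_forall_ne_none {c : Fin n → Option α} (hc : ∀ i, c i ≠ none) (t : ℕ) :
    IsInputConf n t c := by
  have hdom : {i | c i ≠ none} = Set.univ := Set.eq_univ_of_forall hc
  rw [IsInputConf, hdom, Set.ncard_univ, Nat.card_eq_fintype_card, Fintype.card_fin]
  exact Nat.sub_le n t

theorem unanimous_restrictConf {c : Fin n → Option Bool} {s : Finset (Fin n)} {b : Bool}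
    (h : ∀ i ∈ s, c i = some b) : Unanimous (restrictConf c s) b := by
  intro i b' hi
  by_cases his : i ∈ s <;> simp_all [restrictConf]

end Restrict

theorem valStrong_eq_singleton {n : ℕ} {c : Fin n → Option Bool} {b : Bool}
    (h : Unanimous c b) {i : Fin n} (hi : c i ≠ none) : valStrong c = {b} := by
  obtain ⟨b', hb'⟩ := Option.ne_none_iff_exists'.mp hi
  ext b''
  constructor
  · rintro (hu | hnu)
    · exact (hu i b' hb').symm.trans (h i b' hb')
    · exact absurd h (hnu b)
  · rintro rfl
    exact Or.inl h

theorem biInter_valStrong_eq_empty {n : ℕ} {S : Set (Fin n → Option Bool)}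
    {c₀ c₁ : Fin n → Option Bool} (h₀ : c₀ ∈ S) (h₁ : c₁ ∈ S)
    (hv₀ : valStrong c₀ = {false}) (hv₁ : valStrong c₁ = {true}) :
    ⋂ c' ∈ S, valStrong c' = ∅ :=
  Set.subset_empty_iff.mp fun b hb => by
    have hb₀ : b = false := by simpa [hv₀] using Set.mem_iInter₂.mp hb c₀ h₀
    have hb₁ : b = true := by simpa [hv₁] using Set.mem_iInter₂.mp hb c₁ h₁
    exact Bool.false_ne_true (hb₀.symm.trans hb₁)

theorem strong_validity_fails_containment_general
    (n t : ℕ) (htn : t < n) (hn2t : n ≤ 2 * t) :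
    (∃ c : Fin n → Option Bool, IsInputConf n t c ∧ (∀ i, c i ≠ none) ∧
      (⋂ c' ∈ {c' : Fin n → Option Bool | IsInputConf n t c' ∧ Contains c c'},
        valStrong c') = ∅) ∧
    ¬ ∃ Γ : (Fin n → Option Bool) → Bool, ∀ c, IsInputConf n t c →
        ∀ c', IsInputConf n t c' → Contains c c' → Γ c ∈ valStrong c' := by
  set c : Fin n → Option Bool := fun i => some (decide (n - t ≤ (i : ℕ)))
  have hc : ∀ i, c i ≠ none := by simp [c]
  set s : Finset (Fin n) := {i | (i : ℕ) < n - t}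
  have hs : #s = n - t := by rw [Fin.card_filter_val_lt]; omega
  have hsc : #sᶜ = t := by rw [card_compl, hs, Fintype.card_fin]; omega
  have hc₀ : ∀ i ∈ s, c i = some false := fun i hi => by simp_all [c, s]; omega
  have hc₁ : ∀ i ∈ sᶜ, c i = some true := fun i hi => by simp_all [c, s]
  have h₀ : valStrong (restrictConf c s) = {false} :=
    valStrong_eq_singleton (unanimous_restrictConf hc₀) (i := ⟨0, by omega⟩)
      (by simp [restrictConf, c, s]; omega)
  have h₁ : valStrong (restrictConf c sᶜ) = {true} :=
    valStrong_eq_singleton (unanimous_restrictConf hc₁) (i := ⟨n - 1, by omega⟩)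
      (by simp [restrictConf, c, s]; omega)
  have hempty := biInter_valStrong_eq_empty
    (S := {c' | IsInputConf n t c' ∧ Contains c c'})
    ⟨isInputConf_restrictConf hc hs.ge, contains_restrictConf c s⟩
    ⟨isInputConf_restrictConf hc (by omega), contains_restrictConf c sᶜ⟩ h₀ h₁
  refine ⟨⟨c, isInputConf_of_forall_ne_none hc t, hc, hempty⟩, ?_⟩
  rintro ⟨Γ, hΓ⟩
  have hmem : Γ c ∈ ⋂ c' ∈ {c' | IsInputConf n t c' ∧ Contains c c'}, valStrong c' :=
    Set.mem_iInter₂.mpr fun c' ⟨hc', hcc'⟩ =>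
      hΓ c (isInputConf_of_forall_ne_none hc t) c' hc' hcc'
  rw [hempty] at hmem
  exact hmem.elim

/-- For `1 ≤ t < n ≤ 2t`, Strong Validity does not satisfy
the containment condition: some `c ∈ I_n` has
`⋂_{c' ∈ Cnt(c)} val_strong(c') = ∅`, and consequently no function
`Γ : I → {0,1}` with `Γ(c) ∈ ⋂_{c' ∈ Cnt(c)} val_strong(c')` for all `c ∈ I`
exists. -/
theorem strong_validity_fails_containment
    (n t : ℕ) (ht1 : 1 ≤ t) (htn : t < n) (hn2t : n ≤ 2 * t) :
    (∃ c : Fin n → Option Bool, IsInputConf n t c ∧ (∀ i, c i ≠ none) ∧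
      (⋂ c' ∈ {c' : Fin n → Option Bool | IsInputConf n t c' ∧ Contains c c'},
        valStrong c') = ∅) ∧
    ¬ ∃ Γ : (Fin n → Option Bool) → Bool, ∀ c, IsInputConf n t c →
        ∀ c', IsInputConf n t c' → Contains c c' → Γ c ∈ valStrong c' :=
  strong_validity_fails_containment_general n t htn hn2t
end

section
/- Let E be a k-round execution of a deterministic algorithm 𝒜 (k ∈ ℕ ∪ {∞}) with faulty set F, and let p_i ∈ Π. Define E' from E as follows: let M be the set of all messages receive-omitted by p_i in E; for every process p_z and every round j ≤ k, move the messages of M with sender p_z and round j from p_z's sent set in round j to p_z's send-omitted set in round j; remove M from p_i's receive-omitted sets; leave all states, all received sets, and all other sent/send-omitted/receive-omitted memberships unchanged; and let F' be the set of processes having a nonempty send-omitted or receive-omitted set in some round of E'. Assume: (a) |F'| ≤ t; (b) p_i send-omits no message in E; and (c) there exists a process p_h ∉ F with p_h ≠ p_i such that no message sent by p_h in E is receive-omitted by p_i in E. Then E' (with faulty set F') is a k-round execution of 𝒜; E and E' are indistinguishable to every process; p_i ∉ F'; and p_h ∉ F'. -/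
/-- (Swapping receive-omissions for send-omissions.)
Let `E` be a `k`-round execution of `A`, `p_i` a process, `M` the set of all
messages receive-omitted by `p_i` in `E`, and let `E'` be obtained from `E` by
moving every message of `M` from its sender's sent set to its sender's
send-omitted set, removing `M` from `p_i`'s receive-omitted sets, keeping all
states, received sets and all other memberships unchanged, and letting the
faulty set `F'` of `E'` consist of the processes committing an omission in
`E'`.  If `|F'| ≤ t`, `p_i` send-omits nothing in `E`, and some correct
process `p_h ≠ p_i` of `E` has none of its sent messages receive-omitted by
`p_i`, then `E'` is a `k`-round execution of `A`, `E` and `E'` are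
indistinguishable to every process, and `p_i ∉ F'` and `p_h ∉ F'`. -/
theorem swap_omission
    (n t : ℕ) (htn : t < n)
    (A : Algorithm n Bool Bool) (k : ℕ∞)
    (E : Exec A) (hE : IsExec t A k E)
    (i : Fin n)
    (M : Set (Message n))
    (hM : M = {m | ∃ j, InHorizon k j ∧ m ∈ E.recvOmit i j})
    (E' : Exec A)
    (hst : ∀ z j, E'.st z j = E.st z j)
    (hrecvd : ∀ z j, E'.recvd z j = E.recvd z j)
    (hsent : ∀ z j, InHorizon k j → E'.sent z j = E.sent z j \ M)
    (hsendOmit : ∀ z j, InHorizon k j →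
      E'.sendOmit z j = E.sendOmit z j ∪ (E.sent z j ∩ M))
    (hrecvOmit_i : ∀ j, InHorizon k j → E'.recvOmit i j = E.recvOmit i j \ M)
    (hrecvOmit : ∀ z, z ≠ i → ∀ j, InHorizon k j → E'.recvOmit z j = E.recvOmit z j)
    (hfaulty : E'.faulty
      = {z | ∃ j, InHorizon k j ∧ (E'.sendOmit z j ≠ ∅ ∨ E'.recvOmit z j ≠ ∅)})
    (hF' : E'.faulty.encard ≤ (t : ℕ∞))
    (hnoso : ∀ j, InHorizon k j → E.sendOmit i j = ∅)
    (h : Fin n) (hh : h ∉ E.faulty) (hhi : h ≠ i)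
    (hhM : ∀ j, InHorizon k j → ∀ m ∈ E.sent h j, m ∉ M) :
    IsExec t A k E' ∧ (∀ z, Indist k E E' z) ∧ i ∉ E'.faulty ∧ h ∉ E'.faulty := by

  obtain ⟨hcard, hinit, htrans, hwf, hsv, hrv, hov⟩ := hE
  -- the union of sent and send-omitted is unchanged
  have hunion : ∀ z j, InHorizon k j →
      E'.sent z j ∪ E'.sendOmit z j = E.sent z j ∪ E.sendOmit z j := by
    intro z j hj
    rw [hsent z j hj, hsendOmit z j hj]
    ext m
    by_cases hm : m ∈ M <;>
      simp [Set.mem_diff, Set.mem_union, Set.mem_inter_iff, hm] <;> tauto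
  -- every message of M has receiver i and its round is its recvOmit round
  have hMdata : ∀ m ∈ M, m.receiver = i ∧
      ∃ j, InHorizon k j ∧ m.round = j ∧ m ∈ E.recvOmit i j := by
    intro m hm
    rw [hM] at hm
    obtain ⟨j, hj, hmj⟩ := hm
    have := (hwf i j hj).2.2.2.1 m (Or.inr hmj)
    exact ⟨this.1, j, hj, this.2, hmj⟩
  -- a message received by i in a horizon round is not in M
  have hrecvd_notM : ∀ j, InHorizon k j → ∀ m ∈ E.recvd i j, m ∉ M := by
    intro j hj m hmr hmM
    obtain ⟨_, j', hj', hr', hmo⟩ := hMdata m hmM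
    have hr : m.round = j := ((hwf i j hj).2.2.2.1 m (Or.inl hmr)).2
    have hjj : j' = j := by omega
    rw [hjj] at hmo
    have hdisj := (hwf i j hj).2.2.2.2.2.1
    have : m ∈ E.recvd i j ∩ E.recvOmit i j := ⟨hmr, hmo⟩
    rw [hdisj] at this
    exact this
  -- recvOmit of i in E' is empty; sent i ∩ M = ∅
  have hsentiM : ∀ j, InHorizon k j → E.sent i j ∩ M = ∅ := by
    intro j hj
    ext m
    simp only [Set.mem_inter_iff, Set.mem_empty_iff_false, iff_false, not_and]
    intro hms hmM
    have hsend : m.sender = i := ((hwf i j hj).2.2.1 m (Or.inl hms)).1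
    have hrecv : m.receiver = i := (hMdata m hmM).1
    exact m.ne (hsend.trans hrecv.symm)
  have hroiE' : ∀ j, InHorizon k j → E'.recvOmit i j = ∅ := by
    intro j hj
    rw [hrecvOmit_i j hj]
    ext m
    simp only [Set.mem_diff, Set.mem_empty_iff_false, iff_false, not_and, not_not]
    intro hmo
    rw [hM]; exact ⟨j, hj, hmo⟩
  have hsoiE' : ∀ j, InHorizon k j → E'.sendOmit i j = ∅ := by
    intro j hj
    rw [hsendOmit i j hj, hnoso j hj, hsentiM j hj, Set.empty_union]
  -- i is not faulty in E'
  have hinotF : i ∉ E'.faulty := by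
    rw [hfaulty]
    rintro ⟨j, hj, hne⟩
    rcases hne with hne | hne
    · exact hne (hsoiE' j hj)
    · exact hne (hroiE' j hj)
  -- h is correct in E, so its omission sets are empty in E
  have hcorr : ∀ j, InHorizon k j → E.sendOmit h j = ∅ ∧ E.recvOmit h j = ∅ := by
    intro j hj
    by_contra hc
    push_neg at hc
    apply hh
    apply hov h
    refine ⟨j, hj, ?_⟩
    by_cases h1 : E.sendOmit h j = ∅
    · exact Or.inr (Set.nonempty_iff_ne_empty.mp (hc h1))
    · exact Or.inl h1
  have hhnotF : h ∉ E'.faulty := by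
    rw [hfaulty]
    rintro ⟨j, hj, hne⟩
    rcases hne with hne | hne
    · apply hne
      rw [hsendOmit h j hj, (hcorr j hj).1, Set.empty_union]
      ext m
      simp only [Set.mem_inter_iff, Set.mem_empty_iff_false, iff_false, not_and]
      exact fun hms => hhM j hj m hms
    · apply hne
      rw [hrecvOmit h hhi j hj]
      exact (hcorr j hj).2
  -- recvd ∪ recvOmit of E' is contained in that of E
  have hrsub : ∀ z j, InHorizon k j →
      E'.recvd z j ∪ E'.recvOmit z j ⊆ E.recvd z j ∪ E.recvOmit z j := by
    intro z j hj
    by_cases hz : z = i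
    · subst hz
      rw [hrecvd, hrecvOmit_i j hj]
      exact Set.union_subset_union (le_refl _) (Set.diff_subset)
    · rw [hrecvd, hrecvOmit z hz j hj]
  refine ⟨⟨hF', ?_, ?_, ?_, ?_, ?_, ?_⟩, ?_, hinotF, hhnotF⟩
  · -- init
    intro hk z
    obtain ⟨v, hv1, hv2⟩ := hinit hk z
    refine ⟨v, by rw [hst]; exact hv1, ?_⟩
    rw [hunion z 1 ⟨le_refl _, by exact_mod_cast hk⟩]
    exact hv2
  · -- trans
    intro z j hj1 hjk
    have hj' : InHorizon k (j + 1) := ⟨by omega, hjk⟩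
    have := htrans z j hj1 hjk
    rw [hst, hrecvd, this, hst z (j + 1), hunion z (j + 1) hj']
  · -- wf
    intro z j hj
    have hw := hwf z j hj
    refine ⟨by rw [hst]; exact hw.1, by rw [hst]; exact hw.2.1, ?_, ?_, ?_, ?_, ?_, ?_⟩
    · rw [hunion z j hj]; exact hw.2.2.1
    · intro m hm
      exact hw.2.2.2.1 m (hrsub z j hj hm)
    · rw [hsent z j hj, hsendOmit z j hj]
      ext m
      simp only [Set.mem_inter_iff, Set.mem_diff, Set.mem_union,
        Set.mem_empty_iff_false, iff_false, not_and]
      rintro ⟨hms, hmM⟩ (hmo | ⟨_, hmM'⟩)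
      · have : m ∈ E.sent z j ∩ E.sendOmit z j := ⟨hms, hmo⟩
        rw [hw.2.2.2.2.1] at this
        exact this
      · exact hmM hmM'
    · by_cases hz : z = i
      · subst hz
        rw [hroiE' j hj, Set.inter_empty]
      · rw [hrecvd, hrecvOmit z hz j hj]
        exact hw.2.2.2.2.2.1
    · intro m hm m' hm'
      rw [hunion z j hj] at hm hm'
      exact hw.2.2.2.2.2.2.1 m hm m' hm'
    · intro m hm m' hm'
      exact hw.2.2.2.2.2.2.2 m (hrsub z j hj hm) m' (hrsub z j hj hm')
  · -- send validity
    intro z j hj m hm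
    rw [hsent z j hj] at hm
    obtain ⟨hms, hmM⟩ := hm
    have hmr := hsv z j hj m hms
    by_cases hz : m.receiver = i
    · rcases hmr with hmr | hmr
      · rw [hrecvd]; exact Or.inl hmr
      · exfalso
        apply hmM
        rw [hM, hz] at *
        exact ⟨j, hj, hz ▸ hmr⟩
    · rw [hrecvd, hrecvOmit m.receiver hz j hj]
      exact hmr
  · -- receive validity
    intro z j hj m hm
    have hmin : m ∈ E.recvd z j ∪ E.recvOmit z j := hrsub z j hj hm
    have hsentE := hrv z j hj m hmin
    rw [hsent m.sender j hj]
    refine ⟨hsentE, fun hmM => ?_⟩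
    -- m ∈ M : receiver is i
    have hri : m.receiver = i := (hMdata m hmM).1
    have hrz : m.receiver = z := ((hwf z j hj).2.2.2.1 m hmin).1
    have hzi : z = i := hrz ▸ hri
    subst hzi
    rcases hm with hm | hm
    · rw [hrecvd] at hm
      exact hrecvd_notM j hj m hm hmM
    · rw [hroiE' j hj] at hm
      exact hm
  · -- omission validity
    intro z hz
    rw [hfaulty]
    exact hz
  · -- indistinguishability
    intro z
    constructor
    · rw [hst]
    · intro j hj
      rw [hrecvd]
end

section
/- Let n, t ∈ ℕ with t < n and t divisible by 4, let 𝒜 be a deterministic algorithm, and let (A, B, C) be a partition of Π with |B| = |C| = t/4. Let k₁, k₂ ∈ ℕ and b ∈ {0,1} be such that E_0^{B(k₁)} and E_b^{C(k₂)} are mergeable. Then there exists an infinite execution E* of 𝒜 with faulty set B ∪ C such that: every process of A ∪ B proposes 0 and every process of C proposes b in E*; group B is isolated from round k₁ in E*; group C is isolated from round k₂ in E*; E* is indistinguishable from E_0^{B(k₁)} to every process of B; and E* is indistinguishable from E_b^{C(k₂)} to every process of C. -/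
section MergeAux

variable {n : ℕ} {Vi Vo : Type} (A : Algorithm n Vi Vo) (pr : Fin n → Vi)
  (al : Fin n → Fin n → ℕ → Prop)

/-- The run of algorithm `A` in which every process `i` proposes `pr i` and,
in round `j`, receives exactly the messages sent to it by senders `s` with
`al i s j`: `mrun j i` is the pair of the state of `i` in round `j` and the
set of messages that `i` sends in round `j`. -/
def mrun : ℕ → Fin n → A.St × Set (Message n)
  | 0 => fun i => (A.init i (pr i), ∅)
  | 1 => fun i => (A.init i (pr i), A.initMsgs i (pr i))
  | (j+2) => fun i => A.trans ((mrun (j+1)) i).1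
      {m : Message n | m.receiver = i ∧ m ∈ ((mrun (j+1)) m.sender).2 ∧ al i m.sender (j+1)}

/-- The messages received by `i` in round `j` of the merged run: those sent
to it by senders `s` with `al i s j`. -/
def mrecv (j : ℕ) (i : Fin n) : Set (Message n) :=
  {m : Message n | m.receiver = i ∧ m ∈ ((mrun A pr al j) m.sender).2 ∧ al i m.sender j}

lemma mem_mrecv (j : ℕ) (i : Fin n) (m : Message n) :
    m ∈ mrecv A pr al j i ↔
      m.receiver = i ∧ m ∈ ((mrun A pr al j) m.sender).2 ∧ al i m.sender j := Iff.rfl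

lemma mrun_succ (j : ℕ) (hj : 1 ≤ j) (i : Fin n) :
    mrun A pr al (j+1) i
      = A.trans ((mrun A pr al j) i).1 (mrecv A pr al j i) := by
  match j, hj with
  | (j+1), _ => rfl

lemma mrun_wf : ∀ j, 1 ≤ j → ∀ i : Fin n,
    A.proc (mrun A pr al j i).1 = i ∧
    A.rnd (mrun A pr al j i).1 = j ∧
    A.prop (mrun A pr al j i).1 = pr i ∧
    (∀ m ∈ (mrun A pr al j i).2, m.sender = i ∧ m.round = j) ∧
    (∀ m ∈ (mrun A pr al j i).2, ∀ m' ∈ (mrun A pr al j i).2,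
      m.receiver = m'.receiver → m = m') := by
  intro j
  induction j with
  | zero => omega
  | succ j ih =>
    intro _ i
    match j, ih with
    | 0, _ =>
      exact ⟨A.init_proc i (pr i), A.init_rnd i (pr i), A.init_prop i (pr i),
        fun m hm => ⟨A.initMsgs_sender i (pr i) m hm, A.initMsgs_round i (pr i) m hm⟩,
        A.initMsgs_uniq i (pr i)⟩
    | (j+1), ih =>
      have ih' := ih (by omega)
      have hvalid : ValidRecv A.proc A.rnd ((mrun A pr al (j+1)) i).1
          (mrecv A pr al (j+1) i) := by
        constructor
        · rintro m ⟨h1, h2, -⟩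
          exact ⟨by rw [h1, (ih' i).1], by rw [((ih' m.sender).2.2.2.1 m h2).2, (ih' i).2.1]⟩
        · rintro m ⟨hm1, hm2, -⟩ m' ⟨hm'1, hm'2, -⟩ hs
          rw [hs] at hm2
          exact (ih' m'.sender).2.2.2.2 m hm2 m' hm'2 (by rw [hm1, hm'1])
      have htr := A.trans_ok _ _ hvalid
      have heq : mrun A pr al (j+1+1) i
          = A.trans ((mrun A pr al (j+1)) i).1 (mrecv A pr al (j+1) i) := rfl
      rw [heq]
      refine ⟨by rw [htr.1, (ih' i).1], by rw [htr.2.1, (ih' i).2.1],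
        by rw [htr.2.2.1, (ih' i).2.2.1], fun m hm => ?_, htr.2.2.2.2.2⟩
      obtain ⟨hs, hr⟩ := htr.2.2.2.2.1 m hm
      exact ⟨by rw [hs, (ih' i).1], by rw [hr, (ih' i).2.1]⟩

end MergeAux

set_option maxHeartbeats 2000000 in
/-- (Merging two mergeable isolated executions.)
Let `(Agrp, B, C)` partition `Π` with `|B| = |C| = t/4`, and let
`E₁ = E_0^{B(k₁)}` and `E₂ = E_b^{C(k₂)}` be mergeable.  Then there is an
infinite execution `E*` of `A` with faulty set `B ∪ C` in which every process
of `Agrp ∪ B` proposes `0` and every process of `C` proposes `b`, group `B`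
(resp. `C`) is isolated from round `k₁` (resp. `k₂`), and which is
indistinguishable from `E₁` (resp. `E₂`) to every process of `B`
(resp. `C`). -/
theorem merge_executions
    (n t : ℕ) (htn : t < n) (hdvd : 4 ∣ t)
    (A : Algorithm n Bool Bool)
    (Agrp B C : Set (Fin n))
    (hunion : Agrp ∪ B ∪ C = Set.univ)
    (hAB : Disjoint Agrp B) (hAC : Disjoint Agrp C) (hBC : Disjoint B C)
    (hB : B.ncard = t / 4) (hC : C.ncard = t / 4)
    (k₁ k₂ : ℕ) (b : Bool)
    -- mergeability of `E_0^{B(k₁)}` and `E_b^{C(k₂)}`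
    (hmerge : (k₁ = 1 ∧ k₂ = 1) ∨ (k₁ ≤ k₂ + 1 ∧ k₂ ≤ k₁ + 1 ∧ b = false))
    -- `E₁` is the infinite execution `E_0^{B(k₁)}`
    (E₁ : Exec A) (hE₁ : IsExec t A ⊤ E₁) (hp₁ : ∀ i, Proposes E₁ i false)
    (hf₁ : E₁.faulty = B) (hiso₁ : IsolatedFrom t E₁ B k₁)
    -- `E₂` is the infinite execution `E_b^{C(k₂)}`
    (E₂ : Exec A) (hE₂ : IsExec t A ⊤ E₂) (hp₂ : ∀ i, Proposes E₂ i b)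
    (hf₂ : E₂.faulty = C) (hiso₂ : IsolatedFrom t E₂ C k₂) :
    ∃ Estar : Exec A, IsExec t A ⊤ Estar ∧ Estar.faulty = B ∪ C ∧
      (∀ i ∈ Agrp ∪ B, Proposes Estar i false) ∧
      (∀ i ∈ C, Proposes Estar i b) ∧
      IsolatedFrom t Estar B k₁ ∧ IsolatedFrom t Estar C k₂ ∧
      (∀ i ∈ B, Indist ⊤ Estar E₁ i) ∧
      (∀ i ∈ C, Indist ⊤ Estar E₂ i) := by
  classical
  obtain ⟨hcard₁, hinit₁, htrans₁, hwf₁, hsendv₁, hrecvv₁, homit₁⟩ := hE₁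
  obtain ⟨hcard₂, hinit₂, htrans₂, hwf₂, hsendv₂, hrecvv₂, homit₂⟩ := hE₂
  have hd₁ : k₁ ≤ k₂ + 1 := by rcases hmerge with ⟨h1, h2⟩ | ⟨h1, h2, h3⟩ <;> omega
  have hd₂ : k₂ ≤ k₁ + 1 := by rcases hmerge with ⟨h1, h2⟩ | ⟨h1, h2, h3⟩ <;> omega
  have hbt : b = true → k₁ = 1 ∧ k₂ = 1 := by
    rcases hmerge with ⟨h1, h2⟩ | ⟨h1, h2, h3⟩
    · exact fun _ => ⟨h1, h2⟩
    · intro hb; rw [h3] at hb; exact absurd hb (by simp)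
  have hBnotC : ∀ i ∈ B, i ∉ C := fun i hi => Set.disjoint_left.mp hBC hi
  have hCnotB : ∀ i ∈ C, i ∉ B := fun i hi => Set.disjoint_right.mp hBC hi
  set pr : Fin n → Bool := fun i => if i ∈ C then b else false with hpr
  set al : Fin n → Fin n → ℕ → Prop :=
    fun i s j => (i ∈ B → s ∈ B ∨ j < k₁) ∧ (i ∈ C → s ∈ C ∨ j < k₂) with hal
  have hprB : ∀ i, i ∉ C → pr i = false := by
    intro i hi; simp only [hpr]; exact if_neg hi
  have hprC : ∀ i ∈ C, pr i = b := by
    intro i hi; simp only [hpr]; exact if_pos hi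
  -- facts about `E₁`
  have hso₁ : ∀ i j, 1 ≤ j → E₁.sendOmit i j = ∅ := by
    intro i j hj
    by_cases hiB : i ∈ B
    · exact (hiso₁.2.2 i hiB).2.1 j hj
    · by_contra h
      exact hiB (hf₁ ▸ homit₁ i ⟨j, ⟨hj, le_top⟩, Or.inl h⟩)
  have hro₁ : ∀ i j, 1 ≤ j → i ∉ B → E₁.recvOmit i j = ∅ := by
    intro i j hj hiB
    by_contra h
    exact hiB (hf₁ ▸ homit₁ i ⟨j, ⟨hj, le_top⟩, Or.inr h⟩)
  have hroB₁ : ∀ i ∈ B, ∀ j, 1 ≤ j → E₁.recvOmit i j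
      = {m : Message n | m.receiver = i ∧ m.sender ∉ B ∧ k₁ ≤ j ∧ m ∈ E₁.sent m.sender j} :=
    fun i hi j hj => (hiso₁.2.2 i hi).2.2 j hj
  have hst₁ : ∀ i, E₁.st i 1 = A.init i false ∧ E₁.sent i 1 = A.initMsgs i false := by
    intro i
    obtain ⟨v, hv, hm⟩ := hinit₁ le_top i
    have hvf : v = false := by
      have h := hp₁ i
      rw [Proposes, hv, A.init_prop] at h
      exact h
    subst hvf
    rw [hso₁ i 1 le_rfl, Set.union_empty] at hm
    exact ⟨hv, hm⟩
  have htr₁ : ∀ i j, 1 ≤ j →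
      E₁.st i (j+1) = (A.trans (E₁.st i j) (E₁.recvd i j)).1 ∧
      E₁.sent i (j+1) = (A.trans (E₁.st i j) (E₁.recvd i j)).2 := by
    intro i j hj
    have h := htrans₁ i j hj le_top
    rw [hso₁ i (j+1) (by omega), Set.union_empty] at h
    exact ⟨by rw [h], by rw [h]⟩
  have hrcv₁ : ∀ i j, 1 ≤ j → E₁.recvd i j
      = {m : Message n | m.receiver = i ∧ m ∈ E₁.sent m.sender j ∧
          (i ∈ B → (m.sender ∈ B ∨ j < k₁))} := by
    intro i j hj
    have hwfi := hwf₁ i j ⟨hj, le_top⟩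
    ext m
    simp only [Set.mem_setOf_eq]
    constructor
    · intro hm
      have hrec := (hwfi.2.2.2.1 m (Or.inl hm)).1
      have hsent := hrecvv₁ i j ⟨hj, le_top⟩ m (Or.inl hm)
      refine ⟨hrec, hsent, fun hiB => ?_⟩
      have hnot : m ∉ E₁.recvOmit i j := by
        intro hc
        have hmem : m ∈ E₁.recvd i j ∩ E₁.recvOmit i j := ⟨hm, hc⟩
        rw [hwfi.2.2.2.2.2.1] at hmem
        exact hmem
      rw [hroB₁ i hiB j hj] at hnot
      simp only [Set.mem_setOf_eq] at hnot
      by_contra hcon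
      push_neg at hcon
      exact hnot ⟨hrec, hcon.1, by omega, hsent⟩
    · rintro ⟨hrec, hsent, hcond⟩
      have h := hsendv₁ m.sender j ⟨hj, le_top⟩ m hsent
      rw [hrec] at h
      rcases h with h | h
      · exact h
      · exfalso
        by_cases hiB : i ∈ B
        · rw [hroB₁ i hiB j hj] at h
          simp only [Set.mem_setOf_eq] at h
          rcases hcond hiB with hs | hlt
          · exact h.2.1 hs
          · exact absurd h.2.2.1 (by omega)
        · rw [hro₁ i j hj hiB] at h
          exact h
  -- facts about `E₂`
  have hso₂ : ∀ i j, 1 ≤ j → E₂.sendOmit i j = ∅ := by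
    intro i j hj
    by_cases hiC : i ∈ C
    · exact (hiso₂.2.2 i hiC).2.1 j hj
    · by_contra h
      exact hiC (hf₂ ▸ homit₂ i ⟨j, ⟨hj, le_top⟩, Or.inl h⟩)
  have hro₂ : ∀ i j, 1 ≤ j → i ∉ C → E₂.recvOmit i j = ∅ := by
    intro i j hj hiC
    by_contra h
    exact hiC (hf₂ ▸ homit₂ i ⟨j, ⟨hj, le_top⟩, Or.inr h⟩)
  have hroC₂ : ∀ i ∈ C, ∀ j, 1 ≤ j → E₂.recvOmit i j
      = {m : Message n | m.receiver = i ∧ m.sender ∉ C ∧ k₂ ≤ j ∧ m ∈ E₂.sent m.sender j} :=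
    fun i hi j hj => (hiso₂.2.2 i hi).2.2 j hj
  have hst₂ : ∀ i, E₂.st i 1 = A.init i b ∧ E₂.sent i 1 = A.initMsgs i b := by
    intro i
    obtain ⟨v, hv, hm⟩ := hinit₂ le_top i
    have hvf : v = b := by
      have h := hp₂ i
      rw [Proposes, hv, A.init_prop] at h
      exact h
    subst hvf
    rw [hso₂ i 1 le_rfl, Set.union_empty] at hm
    exact ⟨hv, hm⟩
  have htr₂ : ∀ i j, 1 ≤ j →
      E₂.st i (j+1) = (A.trans (E₂.st i j) (E₂.recvd i j)).1 ∧
      E₂.sent i (j+1) = (A.trans (E₂.st i j) (E₂.recvd i j)).2 := by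
    intro i j hj
    have h := htrans₂ i j hj le_top
    rw [hso₂ i (j+1) (by omega), Set.union_empty] at h
    exact ⟨by rw [h], by rw [h]⟩
  have hrcv₂ : ∀ i j, 1 ≤ j → E₂.recvd i j
      = {m : Message n | m.receiver = i ∧ m ∈ E₂.sent m.sender j ∧
          (i ∈ C → (m.sender ∈ C ∨ j < k₂))} := by
    intro i j hj
    have hwfi := hwf₂ i j ⟨hj, le_top⟩
    ext m
    simp only [Set.mem_setOf_eq]
    constructor
    · intro hm
      have hrec := (hwfi.2.2.2.1 m (Or.inl hm)).1
      have hsent := hrecvv₂ i j ⟨hj, le_top⟩ m (Or.inl hm)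
      refine ⟨hrec, hsent, fun hiC => ?_⟩
      have hnot : m ∉ E₂.recvOmit i j := by
        intro hc
        have hmem : m ∈ E₂.recvd i j ∩ E₂.recvOmit i j := ⟨hm, hc⟩
        rw [hwfi.2.2.2.2.2.1] at hmem
        exact hmem
      rw [hroC₂ i hiC j hj] at hnot
      simp only [Set.mem_setOf_eq] at hnot
      by_contra hcon
      push_neg at hcon
      exact hnot ⟨hrec, hcon.1, by omega, hsent⟩
    · rintro ⟨hrec, hsent, hcond⟩
      have h := hsendv₂ m.sender j ⟨hj, le_top⟩ m hsent
      rw [hrec] at h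
      rcases h with h | h
      · exact h
      · exfalso
        by_cases hiC : i ∈ C
        · rw [hroC₂ i hiC j hj] at h
          simp only [Set.mem_setOf_eq] at h
          rcases hcond hiC with hs | hlt
          · exact h.2.1 hs
          · exact absurd h.2.2.1 (by omega)
        · rw [hro₂ i j hj hiC] at h
          exact h
  -- agreement of sent messages, conditional form
  have hO₁ : ∀ j, 1 ≤ j →
      (∀ s ∈ B, (mrun A pr al j s).2 = E₁.sent s j) →
      (b = false → j ≤ k₂ → ∀ s, (mrun A pr al j s).2 = E₁.sent s j) →
      ∀ s, (s ∈ B ∨ j < k₁) → (mrun A pr al j s).2 = E₁.sent s j := by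
    intro j hj h1 h2 s hs
    rcases hs with hs | hlt
    · exact h1 s hs
    · cases hb : b with
      | false => exact h2 hb (by omega) s
      | true =>
        obtain ⟨hk1, hk2⟩ := hbt hb
        exact absurd hlt (by omega)
  have hO₂ : ∀ j, 1 ≤ j →
      (∀ s ∈ C, (mrun A pr al j s).2 = E₂.sent s j) →
      (b = false → j ≤ k₁ → ∀ s, (mrun A pr al j s).2 = E₂.sent s j) →
      ∀ s, (s ∈ C ∨ j < k₂) → (mrun A pr al j s).2 = E₂.sent s j := by
    intro j hj h1 h2 s hs
    rcases hs with hs | hlt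
    · exact h1 s hs
    · cases hb : b with
      | false => exact h2 hb (by omega) s
      | true =>
        obtain ⟨hk1, hk2⟩ := hbt hb
        exact absurd hlt (by omega)
  -- agreement of received messages, conditional form
  have hRB : ∀ j, 1 ≤ j →
      (∀ s, (s ∈ B ∨ j < k₁) → (mrun A pr al j s).2 = E₁.sent s j) →
      ∀ i ∈ B, mrecv A pr al j i = E₁.recvd i j := by
    intro j hj hO i hiB
    have hiC := hBnotC i hiB
    rw [hrcv₁ i j hj]
    ext m
    simp only [mem_mrecv, Set.mem_setOf_eq, hal]
    constructor
    · rintro ⟨h1, h2, h3⟩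
      have hc := h3.1 hiB
      exact ⟨h1, by rw [← hO m.sender hc]; exact h2, fun _ => hc⟩
    · rintro ⟨h1, h2, h3⟩
      have hc := h3 hiB
      exact ⟨h1, by rw [hO m.sender hc]; exact h2, fun _ => hc, fun hc' => absurd hc' hiC⟩
  have hRC : ∀ j, 1 ≤ j →
      (∀ s, (s ∈ C ∨ j < k₂) → (mrun A pr al j s).2 = E₂.sent s j) →
      ∀ i ∈ C, mrecv A pr al j i = E₂.recvd i j := by
    intro j hj hO i hiC
    have hiB := hCnotB i hiC
    rw [hrcv₂ i j hj]
    ext m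
    simp only [mem_mrecv, Set.mem_setOf_eq, hal]
    constructor
    · rintro ⟨h1, h2, h3⟩
      have hc := h3.2 hiC
      exact ⟨h1, by rw [← hO m.sender hc]; exact h2, fun _ => hc⟩
    · rintro ⟨h1, h2, h3⟩
      have hc := h3 hiC
      exact ⟨h1, by rw [hO m.sender hc]; exact h2, fun hc' => absurd hc' hiB, fun _ => hc⟩
  have hRall₁ : ∀ j, 1 ≤ j → b = false → j < k₂ →
      (∀ s, (mrun A pr al j s).2 = E₁.sent s j) →
      ∀ i, mrecv A pr al j i = E₁.recvd i j := by
    intro j hj hb hjk hO i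
    by_cases hiB : i ∈ B
    · exact hRB j hj (fun s _ => hO s) i hiB
    · rw [hrcv₁ i j hj]
      ext m
      simp only [mem_mrecv, Set.mem_setOf_eq, hal]
      constructor
      · rintro ⟨h1, h2, -⟩
        exact ⟨h1, by rw [← hO m.sender]; exact h2, fun hB' => absurd hB' hiB⟩
      · rintro ⟨h1, h2, -⟩
        exact ⟨h1, by rw [hO m.sender]; exact h2, fun hB' => absurd hB' hiB,
          fun _ => Or.inr hjk⟩
  have hRall₂ : ∀ j, 1 ≤ j → b = false → j < k₁ →
      (∀ s, (mrun A pr al j s).2 = E₂.sent s j) →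
      ∀ i, mrecv A pr al j i = E₂.recvd i j := by
    intro j hj hb hjk hO i
    by_cases hiC : i ∈ C
    · exact hRC j hj (fun s _ => hO s) i hiC
    · rw [hrcv₂ i j hj]
      ext m
      simp only [mem_mrecv, Set.mem_setOf_eq, hal]
      constructor
      · rintro ⟨h1, h2, -⟩
        exact ⟨h1, by rw [← hO m.sender]; exact h2, fun hC' => absurd hC' hiC⟩
      · rintro ⟨h1, h2, -⟩
        exact ⟨h1, by rw [hO m.sender]; exact h2, fun _ => Or.inr hjk,
          fun hC' => absurd hC' hiC⟩
  -- the key agreement induction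
  have key : ∀ j, 1 ≤ j → ∀ i,
      (i ∈ B → (mrun A pr al j i).1 = E₁.st i j ∧ (mrun A pr al j i).2 = E₁.sent i j) ∧
      (i ∈ C → (mrun A pr al j i).1 = E₂.st i j ∧ (mrun A pr al j i).2 = E₂.sent i j) ∧
      (b = false → j ≤ k₂ →
        (mrun A pr al j i).1 = E₁.st i j ∧ (mrun A pr al j i).2 = E₁.sent i j) ∧
      (b = false → j ≤ k₁ →
        (mrun A pr al j i).1 = E₂.st i j ∧ (mrun A pr al j i).2 = E₂.sent i j) := by
    intro j
    induction j with
    | zero => omega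
    | succ j ih =>
      intro _
      match j, ih with
      | 0, _ =>
        intro i
        have e1a : (mrun A pr al 1 i).1 = A.init i (pr i) := rfl
        have e1b : (mrun A pr al 1 i).2 = A.initMsgs i (pr i) := rfl
        refine ⟨fun hiB => ?_, fun hiC => ?_, fun hb _ => ?_, fun hb _ => ?_⟩
        · constructor
          · rw [e1a, hprB i (hBnotC i hiB)]; exact (hst₁ i).1.symm
          · rw [e1b, hprB i (hBnotC i hiB)]; exact (hst₁ i).2.symm
        · constructor
          · rw [e1a, hprC i hiC]; exact (hst₂ i).1.symm
          · rw [e1b, hprC i hiC]; exact (hst₂ i).2.symm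
        · have hpri : pr i = false := by
            by_cases hiC : i ∈ C
            · rw [hprC i hiC, hb]
            · exact hprB i hiC
          constructor
          · rw [e1a, hpri]; exact (hst₁ i).1.symm
          · rw [e1b, hpri]; exact (hst₁ i).2.symm
        · have hpri : pr i = false := by
            by_cases hiC : i ∈ C
            · rw [hprC i hiC, hb]
            · exact hprB i hiC
          constructor
          · rw [e1a, hpri, ← hb]; exact (hst₂ i).1.symm
          · rw [e1b, hpri, ← hb]; exact (hst₂ i).2.symm
      | (j+1), ih =>
        have hj' : 1 ≤ j + 1 := by omega
        have ihs := ih hj'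
        have hO₁' := hO₁ (j+1) hj' (fun s hs => ((ihs s).1 hs).2)
          (fun hb hk s => ((ihs s).2.2.1 hb hk).2)
        have hO₂' := hO₂ (j+1) hj' (fun s hs => ((ihs s).2.1 hs).2)
          (fun hb hk s => ((ihs s).2.2.2 hb hk).2)
        intro i
        have hstep : mrun A pr al (j+1+1) i
            = A.trans ((mrun A pr al (j+1)) i).1 (mrecv A pr al (j+1) i) :=
          mrun_succ A pr al (j+1) hj' i
        refine ⟨fun hiB => ?_, fun hiC => ?_, fun hb hk => ?_, fun hb hk => ?_⟩
        · have hR := hRB (j+1) hj' hO₁' i hiB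
          have h1 := (ihs i).1 hiB
          have ht := htr₁ i (j+1) hj'
          exact ⟨by rw [hstep, h1.1, hR, ht.1], by rw [hstep, h1.1, hR, ht.2]⟩
        · have hR := hRC (j+1) hj' hO₂' i hiC
          have h1 := (ihs i).2.1 hiC
          have ht := htr₂ i (j+1) hj'
          exact ⟨by rw [hstep, h1.1, hR, ht.1], by rw [hstep, h1.1, hR, ht.2]⟩
        · have hR := hRall₁ (j+1) hj' hb (by omega)
            (fun s => ((ihs s).2.2.1 hb (by omega)).2) i
          have h1 := (ihs i).2.2.1 hb (by omega)
          have ht := htr₁ i (j+1) hj'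
          exact ⟨by rw [hstep, h1.1, hR, ht.1], by rw [hstep, h1.1, hR, ht.2]⟩
        · have hR := hRall₂ (j+1) hj' hb (by omega)
            (fun s => ((ihs s).2.2.2 hb (by omega)).2) i
          have h1 := (ihs i).2.2.2 hb (by omega)
          have ht := htr₂ i (j+1) hj'
          exact ⟨by rw [hstep, h1.1, hR, ht.1], by rw [hstep, h1.1, hR, ht.2]⟩
  -- unconditional recvd agreement on `B` and `C`
  have hRBfin : ∀ j, 1 ≤ j → ∀ i ∈ B, mrecv A pr al j i = E₁.recvd i j := by
    intro j hj
    exact hRB j hj (hO₁ j hj (fun s hs => ((key j hj s).1 hs).2)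
      (fun hb hk s => ((key j hj s).2.2.1 hb hk).2))
  have hRCfin : ∀ j, 1 ≤ j → ∀ i ∈ C, mrecv A pr al j i = E₂.recvd i j := by
    intro j hj
    exact hRC j hj (hO₂ j hj (fun s hs => ((key j hj s).2.1 hs).2)
      (fun hb hk s => ((key j hj s).2.2.2 hb hk).2))
  -- the merged execution
  refine ⟨⟨B ∪ C, fun i j => (mrun A pr al j i).1, fun i j => (mrun A pr al j i).2,
    fun _ _ => (∅ : Set (Message n)), fun i j => mrecv A pr al j i,
    fun i j => {m : Message n | m.receiver = i ∧ m ∈ ((mrun A pr al j) m.sender).2 ∧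
      ¬ al i m.sender j}⟩,
    ⟨?_, ?_, ?_, ?_, ?_, ?_, ?_⟩, rfl, ?_, ?_, ?_, ?_, ?_, ?_⟩
  · -- cardinality
    calc (B ∪ C).encard ≤ B.encard + C.encard := Set.encard_union_le _ _
      _ = ((t/4 : ℕ) : ℕ∞) + ((t/4 : ℕ) : ℕ∞) := by
          rw [← (Set.toFinite B).cast_ncard_eq, ← (Set.toFinite C).cast_ncard_eq, hB, hC]
      _ ≤ (t : ℕ∞) := by
          rw [← Nat.cast_add, Nat.cast_le]
          omega
  · -- initial states
    intro _ i
    refine ⟨pr i, rfl, ?_⟩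
    show (mrun A pr al 1 i).2 ∪ ∅ = A.initMsgs i (pr i)
    rw [Set.union_empty]
    rfl
  · -- transitions
    intro i j hj _
    show A.trans ((mrun A pr al j i).1) (mrecv A pr al j i)
      = ((mrun A pr al (j+1) i).1, (mrun A pr al (j+1) i).2 ∪ ∅)
    rw [Set.union_empty, Prod.mk.eta]
    exact (mrun_succ A pr al j hj i).symm
  · -- per-round well-formedness
    intro i j hj
    have W := mrun_wf A pr al j hj.1
    refine ⟨(W i).1, (W i).2.1, ?_, ?_, ?_, ?_, ?_, ?_⟩
    · intro m hm
      rcases hm with hm | hm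
      · exact (W i).2.2.2.1 m hm
      · exact absurd hm (Set.notMem_empty m)
    · intro m hm
      rcases hm with hm | hm
      · exact ⟨hm.1, ((W m.sender).2.2.2.1 m hm.2.1).2⟩
      · exact ⟨hm.1, ((W m.sender).2.2.2.1 m hm.2.1).2⟩
    · exact Set.inter_empty _
    · ext m
      simp only [Set.mem_inter_iff, mem_mrecv, Set.mem_setOf_eq, Set.mem_empty_iff_false,
        iff_false, not_and]
      tauto
    · intro m hm m' hm'
      rcases hm with hm | hm
      · rcases hm' with hm' | hm'
        · exact (W i).2.2.2.2 m hm m' hm'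
        · exact absurd hm' (Set.notMem_empty m')
      · exact absurd hm (Set.notMem_empty m)
    · intro m hm m' hm' hs
      have h2 : m ∈ (mrun A pr al j m.sender).2 ∧ m.receiver = i := by
        rcases hm with hm | hm
        · exact ⟨hm.2.1, hm.1⟩
        · exact ⟨hm.2.1, hm.1⟩
      have h2' : m' ∈ (mrun A pr al j m'.sender).2 ∧ m'.receiver = i := by
        rcases hm' with hm' | hm'
        · exact ⟨hm'.2.1, hm'.1⟩
        · exact ⟨hm'.2.1, hm'.1⟩
      rw [hs] at h2
      exact (W m'.sender).2.2.2.2 m h2.1 m' h2'.1 (by rw [h2.2, h2'.2])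
  · -- send-validity
    intro i j hj m hm
    have hs := ((mrun_wf A pr al j hj.1 i).2.2.2.1 m hm).1
    have hmem : m ∈ (mrun A pr al j m.sender).2 := by rw [hs]; exact hm
    by_cases hA : al m.receiver m.sender j
    · exact Or.inl ⟨rfl, hmem, hA⟩
    · exact Or.inr ⟨rfl, hmem, hA⟩
  · -- receive-validity
    intro i j hj m hm
    rcases hm with hm | hm
    · exact hm.2.1
    · exact hm.2.1
  · -- omission-validity
    intro i hi
    obtain ⟨j, hj, h | h⟩ := hi
    · exact absurd rfl h
    · obtain ⟨m, hm⟩ := Set.nonempty_iff_ne_empty.mpr h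
      by_contra hi'
      simp only [Set.mem_union, not_or] at hi'
      refine hm.2.2 ?_
      simp only [hal]
      exact ⟨fun h' => absurd h' hi'.1, fun h' => absurd h' hi'.2⟩
  · -- proposals of `Agrp ∪ B`
    intro i hi
    have hiC : i ∉ C := by
      rcases hi with hi | hi
      · exact Set.disjoint_left.mp hAC hi
      · exact hBnotC i hi
    show A.prop ((mrun A pr al 1 i).1) = false
    rw [(mrun_wf A pr al 1 le_rfl i).2.2.1]
    exact hprB i hiC
  · -- proposals of `C`
    intro i hi
    show A.prop ((mrun A pr al 1 i).1) = b
    rw [(mrun_wf A pr al 1 le_rfl i).2.2.1]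
    exact hprC i hi
  · -- `B` isolated from round `k₁`
    refine ⟨?_, ?_, fun g hg => ⟨Or.inl hg, fun _ _ => rfl, fun j hj => ?_⟩⟩
    · intro h
      rw [h, Set.ncard_univ, Nat.card_eq_fintype_card, Fintype.card_fin] at hB
      omega
    · rw [← (Set.toFinite B).cast_ncard_eq, hB, Nat.cast_le]
      omega
    · have hgC := hBnotC g hg
      ext m
      simp only [Set.mem_setOf_eq, hal]
      constructor
      · rintro ⟨h1, h2, h3⟩
        have hx : ¬(m.sender ∈ B ∨ j < k₁) := fun hx =>
          h3 ⟨fun _ => hx, fun hC' => absurd hC' hgC⟩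
        push_neg at hx
        exact ⟨h1, hx.1, by omega, h2⟩
      · rintro ⟨h1, h2, h3, h4⟩
        refine ⟨h1, h4, fun hc => ?_⟩
        rcases hc.1 hg with h | h
        · exact h2 h
        · omega
  · -- `C` isolated from round `k₂`
    refine ⟨?_, ?_, fun g hg => ⟨Or.inr hg, fun _ _ => rfl, fun j hj => ?_⟩⟩
    · intro h
      rw [h, Set.ncard_univ, Nat.card_eq_fintype_card, Fintype.card_fin] at hC
      omega
    · rw [← (Set.toFinite C).cast_ncard_eq, hC, Nat.cast_le]
      omega
    · have hgB := hCnotB g hg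
      ext m
      simp only [Set.mem_setOf_eq, hal]
      constructor
      · rintro ⟨h1, h2, h3⟩
        have hx : ¬(m.sender ∈ C ∨ j < k₂) := fun hx =>
          h3 ⟨fun hB' => absurd hB' hgB, fun _ => hx⟩
        push_neg at hx
        exact ⟨h1, hx.1, by omega, h2⟩
      · rintro ⟨h1, h2, h3, h4⟩
        refine ⟨h1, h4, fun hc => ?_⟩
        rcases hc.2 hg with h | h
        · exact h2 h
        · omega
  · -- indistinguishable from `E₁` on `B`
    intro i hiB
    constructor
    · show A.prop ((mrun A pr al 1 i).1) = A.prop (E₁.st i 1)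
      rw [(mrun_wf A pr al 1 le_rfl i).2.2.1, hprB i (hBnotC i hiB), hp₁ i]
    · intro j hj
      exact hRBfin j hj.1 i hiB
  · -- indistinguishable from `E₂` on `C`
    intro i hiC
    constructor
    · show A.prop ((mrun A pr al 1 i).1) = A.prop (E₂.st i 1)
      rw [(mrun_wf A pr al 1 le_rfl i).2.2.1, hprC i hiC, hp₂ i]
    · intro j hj
      exact hRCfin j hj.1 i hiC
end
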